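/- arXiv:2603.23724 — 9 statements merged into one kernel-verified Lean document; each statement's English description precedes it below -/
import Mathlib

section
/- In the two-parameter quantum Heisenberg algebra H_{p,q}, the element θ := (1 − pq)·y·x − t satisfies θ·x = q·x·θ, θ·y = q⁻¹·y·θ, and θ·t = t·θ; in particular θ is a normal element of H_{p,q}. -/
open FreeAlgebra

/-- The defining relations of the two-parameter quantum Heisenberg algebra `H_{p,q}`:
generators `0 ↦ x`, `1 ↦ y`, `2 ↦ t` subject to `t x = p⁻¹ x t`, `t y = p y t`,
`y x - q x y = t`. -/
inductive HeisenbergRel (k : Type*) [Field k] (p q : k) :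
    FreeAlgebra k (Fin 3) → FreeAlgebra k (Fin 3) → Prop
  | tx : HeisenbergRel k p q (ι k (2 : Fin 3) * ι k (0 : Fin 3))
      (p⁻¹ • (ι k (0 : Fin 3) * ι k (2 : Fin 3)))
  | ty : HeisenbergRel k p q (ι k (2 : Fin 3) * ι k (1 : Fin 3))
      (p • (ι k (1 : Fin 3) * ι k (2 : Fin 3)))
  | yx : HeisenbergRel k p q
      (ι k (1 : Fin 3) * ι k (0 : Fin 3) - q • (ι k (0 : Fin 3) * ι k (1 : Fin 3)))
      (ι k (2 : Fin 3))


noncomputable section HAux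
variable {k : Type*} [Field k] (p q : k)

def Hx : RingQuot (HeisenbergRel k p q) := RingQuot.mkAlgHom k _ (ι k (0 : Fin 3))
def Hy : RingQuot (HeisenbergRel k p q) := RingQuot.mkAlgHom k _ (ι k (1 : Fin 3))
def Ht : RingQuot (HeisenbergRel k p q) := RingQuot.mkAlgHom k _ (ι k (2 : Fin 3))

lemma rel_tx : Ht p q * Hx p q = p⁻¹ • (Hx p q * Ht p q) := by
  have := RingQuot.mkAlgHom_rel k (HeisenbergRel.tx (k := k) (p := p) (q := q))
  simpa [Hx, Ht, map_mul, map_smul] using this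

lemma rel_ty : Ht p q * Hy p q = p • (Hy p q * Ht p q) := by
  have := RingQuot.mkAlgHom_rel k (HeisenbergRel.ty (k := k) (p := p) (q := q))
  simpa [Hy, Ht, map_mul, map_smul] using this

lemma rel_yx : Hy p q * Hx p q = q • (Hx p q * Hy p q) + Ht p q := by
  have := RingQuot.mkAlgHom_rel k (HeisenbergRel.yx (k := k) (p := p) (q := q))
  simp only [map_sub, map_mul, map_smul] at this
  rw [sub_eq_iff_eq_add] at this
  simpa [Hx, Hy, Ht, add_comm] using this

end HAux

noncomputable section HAux2
variable {k : Type*} [Field k] (p q : k)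

lemma rel_tx' (c : RingQuot (HeisenbergRel k p q)) :
    Ht p q * (Hx p q * c) = p⁻¹ • (Hx p q * (Ht p q * c)) := by
  rw [← mul_assoc, rel_tx, smul_mul_assoc, mul_assoc]

lemma rel_ty' (c : RingQuot (HeisenbergRel k p q)) :
    Ht p q * (Hy p q * c) = p • (Hy p q * (Ht p q * c)) := by
  rw [← mul_assoc, rel_ty, smul_mul_assoc, mul_assoc]

lemma rel_yx' (c : RingQuot (HeisenbergRel k p q)) :
    Hy p q * (Hx p q * c) = q • (Hx p q * (Hy p q * c)) + Ht p q * c := by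
  rw [← mul_assoc, rel_yx, add_mul, smul_mul_assoc, mul_assoc]

def Hθ : RingQuot (HeisenbergRel k p q) := (1 - p * q) • (Hy p q * Hx p q) - Ht p q

lemma theta_x (hp : p ≠ 0) (hq : q ≠ 0) : Hθ p q * Hx p q = q • (Hx p q * Hθ p q) := by
  simp only [Hθ, sub_mul, mul_sub, smul_mul_assoc, mul_smul_comm, mul_assoc,
    rel_yx, rel_yx', rel_tx, rel_tx', smul_add, mul_add, add_mul, smul_smul, smul_sub]
  match_scalars <;> field_simp [hp, hq] <;> ring

lemma theta_y (hp : p ≠ 0) (hq : q ≠ 0) : Hθ p q * Hy p q = q⁻¹ • (Hy p q * Hθ p q) := by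
  simp only [Hθ, sub_mul, mul_sub, smul_mul_assoc, mul_smul_comm, mul_assoc,
    rel_yx, rel_yx', rel_ty, rel_ty', smul_add, mul_add, add_mul, smul_smul, smul_sub]
  match_scalars <;> field_simp [hp, hq] <;> ring

lemma theta_t (hp : p ≠ 0) : Hθ p q * Ht p q = Ht p q * Hθ p q := by
  simp only [Hθ, sub_mul, mul_sub, smul_mul_assoc, mul_smul_comm, mul_assoc,
    rel_yx, rel_yx', rel_tx, rel_tx', rel_ty, rel_ty',
    smul_add, mul_add, add_mul, smul_smul, smul_sub]
  match_scalars <;> field_simp [hp] <;> ring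

end HAux2

noncomputable section HAux3
variable {k : Type*} [Field k] (p q : k)

def Hσf : FreeAlgebra k (Fin 3) →ₐ[k] RingQuot (HeisenbergRel k p q) :=
  FreeAlgebra.lift k ![q • Hx p q, q⁻¹ • Hy p q, Ht p q]

lemma Hσf_rel (hq : q ≠ 0) : ∀ ⦃a b⦄, HeisenbergRel k p q a b → Hσf p q a = Hσf p q b := by
  intro a b r
  cases r <;>
    simp only [Hσf, map_mul, map_smul, map_sub, FreeAlgebra.lift_ι_apply,
      Matrix.cons_val_zero, Matrix.cons_val_one, Matrix.head_cons, Matrix.cons_val_two,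
      Matrix.tail_cons, smul_mul_assoc, mul_smul_comm, smul_smul, smul_sub, rel_tx, rel_ty,
      rel_yx, smul_add]
  · match_scalars <;> ring
  · match_scalars <;> ring
  · match_scalars <;> field_simp [hq] <;> ring

def Hσ (hq : q ≠ 0) : RingQuot (HeisenbergRel k p q) →ₐ[k] RingQuot (HeisenbergRel k p q) :=
  RingQuot.liftAlgHom k ⟨Hσf p q, Hσf_rel p q hq⟩

def Hτf : FreeAlgebra k (Fin 3) →ₐ[k] RingQuot (HeisenbergRel k p q) :=
  FreeAlgebra.lift k ![q⁻¹ • Hx p q, q • Hy p q, Ht p q]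

lemma Hτf_rel (hq : q ≠ 0) : ∀ ⦃a b⦄, HeisenbergRel k p q a b → Hτf p q a = Hτf p q b := by
  intro a b r
  cases r <;>
    simp only [Hτf, map_mul, map_smul, map_sub, FreeAlgebra.lift_ι_apply,
      Matrix.cons_val_zero, Matrix.cons_val_one, Matrix.head_cons, Matrix.cons_val_two,
      Matrix.tail_cons, smul_mul_assoc, mul_smul_comm, smul_smul, smul_sub, rel_tx, rel_ty,
      rel_yx, smul_add]
  · match_scalars <;> ring
  · match_scalars <;> ring
  · match_scalars <;> field_simp [hq] <;> ring

def Hτ (hq : q ≠ 0) : RingQuot (HeisenbergRel k p q) →ₐ[k] RingQuot (HeisenbergRel k p q) :=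
  RingQuot.liftAlgHom k ⟨Hτf p q, Hτf_rel p q hq⟩

lemma sigma_comm (hp : p ≠ 0) (hq : q ≠ 0) (a : RingQuot (HeisenbergRel k p q)) :
    Hθ p q * a = Hσ p q hq a * Hθ p q := by
  obtain ⟨f, rfl⟩ := RingQuot.mkAlgHom_surjective k _ a
  induction f using FreeAlgebra.induction with
  | grade0 r =>
      rw [AlgHom.commutes, AlgHom.commutes]
      exact (Algebra.commutes r (Hθ p q)).symm
  | grade1 i =>
      rw [Hσ, RingQuot.liftAlgHom_mkAlgHom_apply]
      fin_cases i
      · simpa [Hσf, Hx, smul_mul_assoc] using theta_x p q hp hq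
      · simpa [Hσf, Hy, smul_mul_assoc] using theta_y p q hp hq
      · simpa [Hσf, Ht] using theta_t p q hp
  | mul a b ha hb =>
      rw [map_mul, map_mul, ← mul_assoc, ha, mul_assoc, hb, ← mul_assoc]
  | add a b ha hb =>
      rw [map_add, map_add, mul_add, ha, hb, add_mul]

lemma tau_comm (hp : p ≠ 0) (hq : q ≠ 0) (a : RingQuot (HeisenbergRel k p q)) :
    a * Hθ p q = Hθ p q * Hτ p q hq a := by
  obtain ⟨f, rfl⟩ := RingQuot.mkAlgHom_surjective k _ a
  induction f using FreeAlgebra.induction with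
  | grade0 r =>
      rw [AlgHom.commutes, AlgHom.commutes]
      exact Algebra.commutes r (Hθ p q)
  | grade1 i =>
      rw [Hτ, RingQuot.liftAlgHom_mkAlgHom_apply]
      fin_cases i
      · have h : Hx p q * Hθ p q = Hθ p q * (q⁻¹ • Hx p q) := by
          rw [mul_smul_comm, theta_x p q hp hq, smul_smul, inv_mul_cancel₀ hq, one_smul]
        simpa [Hτf, Hx] using h
      · have h : Hy p q * Hθ p q = Hθ p q * (q • Hy p q) := by
          rw [mul_smul_comm, theta_y p q hp hq, smul_smul, mul_inv_cancel₀ hq, one_smul]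
        simpa [Hτf, Hy] using h
      · simpa [Hτf, Ht] using (theta_t p q hp).symm
  | mul a b ha hb =>
      rw [map_mul, map_mul, mul_assoc, hb, ← mul_assoc, ha, mul_assoc]
  | add a b ha hb =>
      rw [map_add, map_add, add_mul, ha, hb, mul_add]

end HAux3

/-- In `H_{p,q}`, the element `θ := (1 - pq) y x - t` satisfies
`θ x = q x θ`, `θ y = q⁻¹ y θ` and `θ t = t θ`; in particular `θ` is a normal
element of `H_{p,q}` (i.e. `θ H = H θ`). -/
theorem heisenberg_theta_normal (k : Type*) [Field k] (p q : k) (hp : p ≠ 0) (hq : q ≠ 0) :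
    let x := RingQuot.mkAlgHom k (HeisenbergRel k p q) (ι k (0 : Fin 3))
    let y := RingQuot.mkAlgHom k (HeisenbergRel k p q) (ι k (1 : Fin 3))
    let t := RingQuot.mkAlgHom k (HeisenbergRel k p q) (ι k (2 : Fin 3))
    let θ := (1 - p * q) • (y * x) - t
    θ * x = q • (x * θ) ∧
    θ * y = q⁻¹ • (y * θ) ∧
    θ * t = t * θ ∧
    (∀ a : RingQuot (HeisenbergRel k p q), ∃ b, θ * a = b * θ) ∧
    (∀ a : RingQuot (HeisenbergRel k p q), ∃ b, a * θ = θ * b) := by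
  exact ⟨theta_x p q hp hq, theta_y p q hp hq, theta_t p q hp,
    fun a => ⟨Hσ p q hq a, sigma_comm p q hp hq a⟩,
    fun a => ⟨Hτ p q hq a, tau_comm p q hp hq a⟩⟩
end

section
/- Suppose p is a primitive n-th root of unity and q is a primitive m-th root of unity in k, with q ≠ p⁻¹. Then in the two-parameter quantum Heisenberg algebra H_{p,q}, the elements x^{mn}, y^{mn}, and tⁿ are central. -/
open FreeAlgebra

section aux
variable {k : Type*} [Field k] (p q : k)

local notation "X" => RingQuot.mkAlgHom k (HeisenbergRel k p q) (ι k (0 : Fin 3))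
local notation "Y" => RingQuot.mkAlgHom k (HeisenbergRel k p q) (ι k (1 : Fin 3))
local notation "T" => RingQuot.mkAlgHom k (HeisenbergRel k p q) (ι k (2 : Fin 3))

lemma hrel_tx : T * X = p⁻¹ • (X * T) := by
  have := RingQuot.mkAlgHom_rel k (HeisenbergRel.tx (k := k) (p := p) (q := q))
  simpa [map_mul, map_smul] using this

lemma hrel_ty : T * Y = p • (Y * T) := by
  have := RingQuot.mkAlgHom_rel k (HeisenbergRel.ty (k := k) (p := p) (q := q))
  simpa [map_mul, map_smul] using this

lemma hrel_yx : Y * X = q • (X * Y) + T := by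
  have := RingQuot.mkAlgHom_rel k (HeisenbergRel.yx (k := k) (p := p) (q := q))
  simp only [map_sub, map_mul, map_smul] at this
  linear_combination (norm := module) this

lemma hrel_xy (hq0 : q ≠ 0) : X * Y = q⁻¹ • (Y * X) + (-q⁻¹) • T := by
  have h : q⁻¹ • (Y * X) = q⁻¹ • (q • (X * Y) + T) := by rw [hrel_yx p q]
  rw [smul_add, smul_smul, inv_mul_cancel₀ hq0, one_smul] at h
  rw [h]
  module

lemma h_t_xpow : ∀ N : ℕ, T * X ^ N = (p⁻¹) ^ N • (X ^ N * T)
  | 0 => by simp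
  | (N+1) => by
    rw [pow_succ, ← mul_assoc, h_t_xpow N, smul_mul_assoc, mul_assoc, hrel_tx]
    simp only [smul_mul_assoc, mul_smul_comm, smul_smul, mul_assoc, pow_succ]
    all_goals (match_scalars <;> ring)

lemma h_t_ypow : ∀ N : ℕ, T * Y ^ N = p ^ N • (Y ^ N * T)
  | 0 => by simp
  | (N+1) => by
    rw [pow_succ, ← mul_assoc, h_t_ypow N, smul_mul_assoc, mul_assoc, hrel_ty]
    simp only [smul_mul_assoc, mul_smul_comm, smul_smul, mul_assoc, pow_succ]
    all_goals (match_scalars <;> ring)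

lemma h_tpow_x : ∀ N : ℕ, T ^ N * X = (p⁻¹) ^ N • (X * T ^ N)
  | 0 => by simp
  | (N+1) => by
    rw [pow_succ, mul_assoc, hrel_tx, mul_smul_comm, ← mul_assoc, h_tpow_x N]
    simp only [smul_mul_assoc, mul_smul_comm, smul_smul, mul_assoc, pow_succ]
    all_goals (match_scalars <;> ring)

lemma h_tpow_y : ∀ N : ℕ, T ^ N * Y = p ^ N • (Y * T ^ N)
  | 0 => by simp
  | (N+1) => by
    rw [pow_succ, mul_assoc, hrel_ty, mul_smul_comm, ← mul_assoc, h_tpow_y N]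
    simp only [smul_mul_assoc, mul_smul_comm, smul_smul, mul_assoc, pow_succ]
    all_goals (match_scalars <;> ring)

lemma h_y_xpow (hp0 : p ≠ 0) (hq0 : q ≠ 0) :
    ∀ N : ℕ, (q - p⁻¹) • (Y * X ^ (N + 1)) =
      ((q - p⁻¹) * q ^ (N + 1)) • (X ^ (N + 1) * Y) +
      (q ^ (N + 1) - (p⁻¹) ^ (N + 1)) • (X ^ N * T)
  | 0 => by
    simp only [zero_add, pow_one, pow_zero, one_mul]
    rw [hrel_yx]
    match_scalars
    all_goals (try simp only [inv_pow])
    all_goals (try field_simp)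
    all_goals (try ring)
    all_goals (try simp only [inv_pow])
    all_goals (try field_simp)
    all_goals (try ring)
  | (N+1) => by
    have ih := congrArg (· * X) (h_y_xpow hp0 hq0 N)
    simp only [smul_mul_assoc, add_mul, mul_assoc, ← pow_succ] at ih
    rw [ih, hrel_yx, hrel_tx]
    simp only [smul_mul_assoc, mul_smul_comm, smul_smul, smul_add, mul_add,
      neg_smul, smul_neg, mul_neg, neg_mul, mul_assoc, pow_succ]
    match_scalars
    all_goals (try simp only [inv_pow])
    all_goals (try field_simp)
    all_goals (try ring)
    all_goals (try simp only [inv_pow])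
    all_goals (try field_simp)
    all_goals (try ring)

lemma h_x_ypow (hp0 : p ≠ 0) (hq0 : q ≠ 0) :
    ∀ N : ℕ, (q * p - 1) • (X * Y ^ (N + 1)) =
      ((q * p - 1) * (q⁻¹) ^ (N + 1)) • (Y ^ (N + 1) * X) +
      ((q⁻¹) ^ (N + 1) - p ^ (N + 1)) • (Y ^ N * T)
  | 0 => by
    simp only [zero_add, pow_one, pow_zero, one_mul]
    rw [hrel_xy p q hq0]
    match_scalars
    all_goals (try simp only [inv_pow])
    all_goals (try field_simp)
    all_goals (try ring)
    all_goals (try simp only [inv_pow])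
    all_goals (try field_simp)
    all_goals (try ring)
  | (N+1) => by
    have ih := congrArg (· * Y) (h_x_ypow hp0 hq0 N)
    simp only [smul_mul_assoc, add_mul, mul_assoc, ← pow_succ] at ih
    rw [ih, hrel_xy p q hq0, hrel_ty]
    simp only [smul_mul_assoc, mul_smul_comm, smul_smul, smul_sub, mul_sub,
      sub_eq_add_neg, neg_smul, smul_neg, mul_neg, neg_mul, mul_add, smul_add,
      mul_assoc, pow_succ]
    match_scalars
    all_goals (try simp only [inv_pow])
    all_goals (try field_simp)
    all_goals (try ring)
    all_goals (try simp only [inv_pow])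
    all_goals (try field_simp)
    all_goals (try ring)

lemma central_of (z : RingQuot (HeisenbergRel k p q))
    (hx : z * X = X * z) (hy : z * Y = Y * z) (ht : z * T = T * z) :
    z ∈ Subalgebra.center k (RingQuot (HeisenbergRel k p q)) := by
  rw [Subalgebra.mem_center_iff]
  intro b
  obtain ⟨a, rfl⟩ := RingQuot.mkAlgHom_surjective k (HeisenbergRel k p q) b
  induction a using FreeAlgebra.induction with
  | grade0 r => simp [Algebra.commutes]
  | grade1 i =>
      fin_cases i
      · exact hx.symm
      · exact hy.symm
      · exact ht.symm
  | mul a b iha ihb => rw [map_mul, mul_assoc, ihb, ← mul_assoc, iha, mul_assoc]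
  | add a b iha ihb => rw [map_add, add_mul, iha, ihb, mul_add]

end aux

/-- If `p` is a primitive `n`-th root of unity and `q` is a primitive
`m`-th root of unity, with `q ≠ p⁻¹`, then in `H_{p,q}` the elements `x^{mn}`, `y^{mn}`
and `tⁿ` are central. -/
theorem heisenberg_central_powers (k : Type*) [Field k] (p q : k)
    (n m : ℕ) (hn : 0 < n) (hm : 0 < m)
    (hp : IsPrimitiveRoot p n) (hq : IsPrimitiveRoot q m) (hpq : q ≠ p⁻¹) :
    let x := RingQuot.mkAlgHom k (HeisenbergRel k p q) (ι k (0 : Fin 3))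
    let y := RingQuot.mkAlgHom k (HeisenbergRel k p q) (ι k (1 : Fin 3))
    let t := RingQuot.mkAlgHom k (HeisenbergRel k p q) (ι k (2 : Fin 3))
    x ^ (m * n) ∈ Subalgebra.center k (RingQuot (HeisenbergRel k p q)) ∧
    y ^ (m * n) ∈ Subalgebra.center k (RingQuot (HeisenbergRel k p q)) ∧
    t ^ n ∈ Subalgebra.center k (RingQuot (HeisenbergRel k p q)) := by
  intro x y t
  have hp0 : p ≠ 0 := hp.ne_zero hn.ne'
  have hq0 : q ≠ 0 := hq.ne_zero hm.ne'
  have hpn : p ^ n = 1 := hp.pow_eq_one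
  have hqm : q ^ m = 1 := hq.pow_eq_one
  have hpmn : p ^ (m * n) = 1 := by rw [mul_comm, pow_mul, hpn, one_pow]
  have hqmn : q ^ (m * n) = 1 := by rw [pow_mul, hqm, one_pow]
  have hipmn : (p⁻¹) ^ (m * n) = 1 := by rw [inv_pow, hpmn, inv_one]
  have hiqmn : (q⁻¹) ^ (m * n) = 1 := by rw [inv_pow, hqmn, inv_one]
  have hipn : (p⁻¹) ^ n = 1 := by rw [inv_pow, hpn, inv_one]
  have hd : q - p⁻¹ ≠ 0 := sub_ne_zero.mpr hpq
  have hd2 : q * p - 1 ≠ 0 :=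
    sub_ne_zero.mpr (fun h => hpq (eq_inv_of_mul_eq_one_left h))
  obtain ⟨N, hN⟩ : ∃ N, m * n = N + 1 :=
    ⟨m * n - 1, (Nat.succ_pred_eq_of_pos (Nat.mul_pos hm hn)).symm⟩
  refine ⟨?_, ?_, ?_⟩
  · -- x ^ (m*n)
    have h1 : t * x ^ (m * n) = x ^ (m * n) * t := by
      have h := h_t_xpow p q (m * n)
      rwa [hipmn, one_smul] at h
    have h2 : y * x ^ (m * n) = x ^ (m * n) * y := by
      have h := h_y_xpow p q hp0 hq0 N
      rw [← hN, hqmn, hipmn, mul_one, sub_self, zero_smul, add_zero] at h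
      calc y * x ^ (m * n) = (q - p⁻¹)⁻¹ • ((q - p⁻¹) • (y * x ^ (m * n))) :=
          (inv_smul_smul₀ hd _).symm
        _ = x ^ (m * n) * y := by rw [h, inv_smul_smul₀ hd]
    exact central_of p q _ ((pow_succ x _).symm.trans (pow_succ' x _))
      h2.symm h1.symm
  · -- y ^ (m*n)
    have h1 : t * y ^ (m * n) = y ^ (m * n) * t := by
      have h := h_t_ypow p q (m * n)
      rwa [hpmn, one_smul] at h
    have h2 : x * y ^ (m * n) = y ^ (m * n) * x := by
      have h := h_x_ypow p q hp0 hq0 N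
      rw [← hN, hiqmn, hpmn, mul_one, sub_self, zero_smul, add_zero] at h
      calc x * y ^ (m * n) = (q * p - 1)⁻¹ • ((q * p - 1) • (x * y ^ (m * n))) :=
          (inv_smul_smul₀ hd2 _).symm
        _ = y ^ (m * n) * x := by rw [h, inv_smul_smul₀ hd2]
    exact central_of p q _ h2.symm ((pow_succ y _).symm.trans (pow_succ' y _))
      h1.symm
  · -- t ^ n
    have h1 : t ^ n * x = x * t ^ n := by
      have h := h_tpow_x p q n
      rwa [hipn, one_smul] at h
    have h2 : t ^ n * y = y * t ^ n := by
      have h := h_tpow_y p q n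
      rwa [hpn, one_smul] at h
    exact central_of p q _ h1 h2 ((pow_succ t _).symm.trans (pow_succ' t _))
end

section
/- If α and β are l-th roots of unity in k, then in the two-parameter quantum matrix algebra M₂(α,β) the elements X₁₁ˡ, X₁₂ˡ, X₂₁ˡ, and X₂₂ˡ are central. -/
open FreeAlgebra

/-- The defining relations of the two-parameter quantum matrix algebra `M₂(α,β)`:
generators `0 ↦ X₁₁`, `1 ↦ X₁₂`, `2 ↦ X₂₁`, `3 ↦ X₂₂`. -/
inductive QuantumMatrixRel (k : Type*) [Field k] (α β : k) :
    FreeAlgebra k (Fin 4) → FreeAlgebra k (Fin 4) → Prop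
  | r1 : QuantumMatrixRel k α β (ι k (1 : Fin 4) * ι k (0 : Fin 4))
      (α • (ι k (0 : Fin 4) * ι k (1 : Fin 4)))
  | r2 : QuantumMatrixRel k α β (ι k (3 : Fin 4) * ι k (2 : Fin 4))
      (α • (ι k (2 : Fin 4) * ι k (3 : Fin 4)))
  | r3 : QuantumMatrixRel k α β (ι k (2 : Fin 4) * ι k (0 : Fin 4))
      (β • (ι k (0 : Fin 4) * ι k (2 : Fin 4)))
  | r4 : QuantumMatrixRel k α β (ι k (3 : Fin 4) * ι k (1 : Fin 4))
      (β • (ι k (1 : Fin 4) * ι k (3 : Fin 4)))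
  | r5 : QuantumMatrixRel k α β (ι k (2 : Fin 4) * ι k (1 : Fin 4))
      ((β * α⁻¹) • (ι k (1 : Fin 4) * ι k (2 : Fin 4)))
  | r6 : QuantumMatrixRel k α β
      (ι k (3 : Fin 4) * ι k (0 : Fin 4) - ι k (0 : Fin 4) * ι k (3 : Fin 4))
      ((β - α⁻¹) • (ι k (1 : Fin 4) * ι k (2 : Fin 4)))

section aux

variable {k : Type*} [Field k] {A : Type*} [Ring A] [Algebra k A]

lemma qpow_left {x y : A} {s : k} (h : y * x = s • (x * y)) :
    ∀ n, y * x ^ n = s ^ n • (x ^ n * y)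
  | 0 => by simp
  | n + 1 => by
    rw [pow_succ, ← mul_assoc, qpow_left h n, smul_mul_assoc, mul_assoc, h,
      mul_smul_comm, smul_smul, ← mul_assoc, ← pow_succ, ← pow_succ]

lemma qpow_right {x y : A} {s : k} (h : y * x = s • (x * y)) :
    ∀ n, y ^ n * x = s ^ n • (x * y ^ n)
  | 0 => by simp
  | n + 1 => by
    rw [pow_succ, mul_assoc, h, mul_smul_comm, ← mul_assoc, qpow_right h n,
      smul_mul_assoc, smul_smul, mul_assoc, ← pow_succ']

lemma qkey {a b c d : A} {s t : k} (h1 : d * a = a * d + t • (b * c))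
    (h2 : (b * c) * a = s • (a * (b * c))) :
    ∀ n, d * a ^ (n + 1) =
      a ^ (n + 1) * d + (t * ∑ i ∈ Finset.range (n + 1), s ^ i) • (a ^ n * (b * c))
  | 0 => by simpa using h1
  | n + 1 => by
    have coeff : t + (t * ∑ i ∈ Finset.range (n + 1), s ^ i) * s
        = t * ∑ i ∈ Finset.range (n + 2), s ^ i := by
      rw [show (∑ i ∈ Finset.range (n + 2), s ^ i)
          = s * ∑ i ∈ Finset.range (n + 1), s ^ i + 1 from geom_sum_succ]
      ring
    calc d * a ^ (n + 2) = (d * a ^ (n + 1)) * a := by rw [pow_succ, mul_assoc]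
    _ = (a ^ (n + 1) * d + (t * ∑ i ∈ Finset.range (n + 1), s ^ i) • (a ^ n * (b * c))) * a := by
        rw [qkey h1 h2 n]
    _ = a ^ (n + 1) * (d * a)
        + (t * ∑ i ∈ Finset.range (n + 1), s ^ i) • (a ^ n * ((b * c) * a)) := by
        simp only [add_mul, smul_mul_assoc, mul_assoc]
    _ = a ^ (n + 2) * d + (t + (t * ∑ i ∈ Finset.range (n + 1), s ^ i) * s)
        • (a ^ (n + 1) * (b * c)) := by
        rw [h1, h2]
        simp only [mul_add, mul_smul_comm, smul_smul, add_smul, ← mul_assoc, ← pow_succ]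
        abel
    _ = _ := by rw [coeff]

end aux

/-- If `α` and `β` are `l`-th roots of unity, then in `M₂(α,β)` the
elements `X₁₁ˡ`, `X₁₂ˡ`, `X₂₁ˡ`, `X₂₂ˡ` are central. -/
theorem quantumMatrix_central_powers (k : Type*) [Field k] (α β : k)
    (l : ℕ) (hl : 0 < l) (hα : α ^ l = 1) (hβ : β ^ l = 1) :
    let X11 := RingQuot.mkAlgHom k (QuantumMatrixRel k α β) (ι k (0 : Fin 4))
    let X12 := RingQuot.mkAlgHom k (QuantumMatrixRel k α β) (ι k (1 : Fin 4))
    let X21 := RingQuot.mkAlgHom k (QuantumMatrixRel k α β) (ι k (2 : Fin 4))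
    let X22 := RingQuot.mkAlgHom k (QuantumMatrixRel k α β) (ι k (3 : Fin 4))
    X11 ^ l ∈ Subalgebra.center k (RingQuot (QuantumMatrixRel k α β)) ∧
    X12 ^ l ∈ Subalgebra.center k (RingQuot (QuantumMatrixRel k α β)) ∧
    X21 ^ l ∈ Subalgebra.center k (RingQuot (QuantumMatrixRel k α β)) ∧
    X22 ^ l ∈ Subalgebra.center k (RingQuot (QuantumMatrixRel k α β)) := by
  intro X11 X12 X21 X22
  have hα0 : α ≠ 0 := by
    intro h; rw [h, zero_pow hl.ne'] at hα; exact zero_ne_one hα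
  have hβ0 : β ≠ 0 := by
    intro h; rw [h, zero_pow hl.ne'] at hβ; exact zero_ne_one hβ
  set f := RingQuot.mkAlgHom k (QuantumMatrixRel k α β) with hfdef
  -- the six defining relations in the quotient
  have e1 : f (ι k 1) * f (ι k 0) = α • (f (ι k 0) * f (ι k 1)) := by
    simpa only [map_mul, map_smul] using
      RingQuot.mkAlgHom_rel k (QuantumMatrixRel.r1 (k := k) (α := α) (β := β))
  have e2 : f (ι k 3) * f (ι k 2) = α • (f (ι k 2) * f (ι k 3)) := by
    simpa only [map_mul, map_smul] using
      RingQuot.mkAlgHom_rel k (QuantumMatrixRel.r2 (k := k) (α := α) (β := β))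
  have e3 : f (ι k 2) * f (ι k 0) = β • (f (ι k 0) * f (ι k 2)) := by
    simpa only [map_mul, map_smul] using
      RingQuot.mkAlgHom_rel k (QuantumMatrixRel.r3 (k := k) (α := α) (β := β))
  have e4 : f (ι k 3) * f (ι k 1) = β • (f (ι k 1) * f (ι k 3)) := by
    simpa only [map_mul, map_smul] using
      RingQuot.mkAlgHom_rel k (QuantumMatrixRel.r4 (k := k) (α := α) (β := β))
  have e5 : f (ι k 2) * f (ι k 1) = (β * α⁻¹) • (f (ι k 1) * f (ι k 2)) := by
    simpa only [map_mul, map_smul] using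
      RingQuot.mkAlgHom_rel k (QuantumMatrixRel.r5 (k := k) (α := α) (β := β))
  have e6 : f (ι k 3) * f (ι k 0) - f (ι k 0) * f (ι k 3)
      = (β - α⁻¹) • (f (ι k 1) * f (ι k 2)) := by
    simpa only [map_mul, map_smul, map_sub] using
      RingQuot.mkAlgHom_rel k (QuantumMatrixRel.r6 (k := k) (α := α) (β := β))
  -- an element commuting with the four generators is central
  have hcen : ∀ z : RingQuot (QuantumMatrixRel k α β),
      (∀ i : Fin 4, f (ι k i) * z = z * f (ι k i)) →
      z ∈ Subalgebra.center k (RingQuot (QuantumMatrixRel k α β)) := by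
    intro z hz
    rw [Subalgebra.mem_center_iff]
    intro g
    obtain ⟨p, rfl⟩ := RingQuot.mkAlgHom_surjective k (QuantumMatrixRel k α β) g
    induction p using FreeAlgebra.induction with
    | grade0 r =>
        rw [AlgHom.commutes]
        exact Algebra.commutes r z
    | grade1 i => exact hz i
    | mul x y hx hy => rw [map_mul, mul_assoc, hy, ← mul_assoc, hx, mul_assoc]
    | add x y hx hy => rw [map_add, add_mul, mul_add, hx, hy]
  obtain ⟨m, rfl⟩ : ∃ m, l = m + 1 := ⟨l - 1, (Nat.succ_pred_eq_of_pos hl).symm⟩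
  -- vanishing of the geometric-sum coefficients
  have hαβl : (α * β) ^ (m + 1) = 1 := by rw [mul_pow, hα, hβ, one_mul]
  have g1 : (∑ i ∈ Finset.range (m + 1), (α * β) ^ i) * (α * β - 1) = 0 := by
    rw [geom_sum_mul, hαβl, sub_self]
  have z1 : (β - α⁻¹) * ∑ i ∈ Finset.range (m + 1), (α * β) ^ i = 0 := by
    have hβα : β - α⁻¹ = α⁻¹ * (α * β - 1) := by
      field_simp
      try ring
    rw [hβα]
    linear_combination α⁻¹ * g1
  have hαβl' : ((α * β)⁻¹) ^ (m + 1) = 1 := by rw [inv_pow, hαβl, inv_one]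
  have g2 : (∑ i ∈ Finset.range (m + 1), ((α * β)⁻¹) ^ i) * ((α * β)⁻¹ - 1) = 0 := by
    rw [geom_sum_mul, hαβl', sub_self]
  have z2 : (α⁻¹ - β) * ∑ i ∈ Finset.range (m + 1), ((α * β)⁻¹) ^ i = 0 := by
    have hβα : α⁻¹ - β = β * ((α * β)⁻¹ - 1) := by
      field_simp
      try ring
    rw [hβα]
    linear_combination β * g2
  -- commutation relations in convenient forms
  have e1' : f (ι k 0) * f (ι k 1) = α⁻¹ • (f (ι k 1) * f (ι k 0)) := by
    rw [e1, smul_smul, inv_mul_cancel₀ hα0, one_smul]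
  have e2' : f (ι k 2) * f (ι k 3) = α⁻¹ • (f (ι k 3) * f (ι k 2)) := by
    rw [e2, smul_smul, inv_mul_cancel₀ hα0, one_smul]
  have e4' : f (ι k 1) * f (ι k 3) = β⁻¹ • (f (ι k 3) * f (ι k 1)) := by
    rw [e4, smul_smul, inv_mul_cancel₀ hβ0, one_smul]
  have e6' : f (ι k 3) * f (ι k 0)
      = f (ι k 0) * f (ι k 3) + (β - α⁻¹) • (f (ι k 1) * f (ι k 2)) := by
    rw [← e6]; abel
  have e6'' : f (ι k 0) * f (ι k 3)
      = f (ι k 3) * f (ι k 0) + (α⁻¹ - β) • (f (ι k 1) * f (ι k 2)) := by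
    have hB : f (ι k 0) * f (ι k 3)
        = f (ι k 3) * f (ι k 0) - (β - α⁻¹) • (f (ι k 1) * f (ι k 2)) := by
      rw [← e6]; abel
    have subsmul : ∀ (s t : k) (z : RingQuot (QuantumMatrixRel k α β)),
        (s - t) • z = s • z - t • z := fun s t z => sub_smul s t z
    rw [hB, subsmul, subsmul]
    abel
  have hbc0 : (f (ι k 1) * f (ι k 2)) * f (ι k 0)
      = (α * β) • (f (ι k 0) * (f (ι k 1) * f (ι k 2))) := by
    rw [mul_assoc, e3, mul_smul_comm, ← mul_assoc, e1, smul_mul_assoc, smul_smul,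
      mul_assoc, mul_comm β α]
  have hbc3 : (f (ι k 1) * f (ι k 2)) * f (ι k 3)
      = (α * β)⁻¹ • (f (ι k 3) * (f (ι k 1) * f (ι k 2))) := by
    rw [mul_assoc, e2', mul_smul_comm, ← mul_assoc, e4', smul_mul_assoc, smul_smul,
      mul_assoc, mul_inv]
  refine ⟨?_, ?_, ?_, ?_⟩
  · -- X11 ^ l central
    have c0 : f (ι k 0) * f (ι k 0) ^ (m + 1) = f (ι k 0) ^ (m + 1) * f (ι k 0) :=
      (Commute.refl _).pow_right (m + 1)
    have c1 : f (ι k 1) * f (ι k 0) ^ (m + 1) = f (ι k 0) ^ (m + 1) * f (ι k 1) := by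
      rw [qpow_left e1 (m + 1), hα, one_smul]
    have c2 : f (ι k 2) * f (ι k 0) ^ (m + 1) = f (ι k 0) ^ (m + 1) * f (ι k 2) := by
      rw [qpow_left e3 (m + 1), hβ, one_smul]
    have c3 : f (ι k 3) * f (ι k 0) ^ (m + 1) = f (ι k 0) ^ (m + 1) * f (ι k 3) := by
      rw [qkey e6' hbc0 m, z1, zero_smul, add_zero]
    refine hcen _ fun i => ?_
    fin_cases i
    exacts [c0, c1, c2, c3]
  · -- X12 ^ l central
    have c0 : f (ι k 0) * f (ι k 1) ^ (m + 1) = f (ι k 1) ^ (m + 1) * f (ι k 0) := by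
      rw [qpow_right e1 (m + 1), hα, one_smul]
    have c1 : f (ι k 1) * f (ι k 1) ^ (m + 1) = f (ι k 1) ^ (m + 1) * f (ι k 1) :=
      (Commute.refl _).pow_right (m + 1)
    have c2 : f (ι k 2) * f (ι k 1) ^ (m + 1) = f (ι k 1) ^ (m + 1) * f (ι k 2) := by
      rw [qpow_left e5 (m + 1), mul_pow, hβ, inv_pow, hα, inv_one, one_mul, one_smul]
    have c3 : f (ι k 3) * f (ι k 1) ^ (m + 1) = f (ι k 1) ^ (m + 1) * f (ι k 3) := by
      rw [qpow_left e4 (m + 1), hβ, one_smul]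
    refine hcen _ fun i => ?_
    fin_cases i
    exacts [c0, c1, c2, c3]
  · -- X21 ^ l central
    have c0 : f (ι k 0) * f (ι k 2) ^ (m + 1) = f (ι k 2) ^ (m + 1) * f (ι k 0) := by
      rw [qpow_right e3 (m + 1), hβ, one_smul]
    have c1 : f (ι k 1) * f (ι k 2) ^ (m + 1) = f (ι k 2) ^ (m + 1) * f (ι k 1) := by
      rw [qpow_right e5 (m + 1), mul_pow, hβ, inv_pow, hα, inv_one, one_mul, one_smul]
    have c2 : f (ι k 2) * f (ι k 2) ^ (m + 1) = f (ι k 2) ^ (m + 1) * f (ι k 2) :=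
      (Commute.refl _).pow_right (m + 1)
    have c3 : f (ι k 3) * f (ι k 2) ^ (m + 1) = f (ι k 2) ^ (m + 1) * f (ι k 3) := by
      rw [qpow_left e2 (m + 1), hα, one_smul]
    refine hcen _ fun i => ?_
    fin_cases i
    exacts [c0, c1, c2, c3]
  · -- X22 ^ l central
    have c0 : f (ι k 0) * f (ι k 3) ^ (m + 1) = f (ι k 3) ^ (m + 1) * f (ι k 0) := by
      rw [qkey e6'' hbc3 m, z2, zero_smul, add_zero]
    have c1 : f (ι k 1) * f (ι k 3) ^ (m + 1) = f (ι k 3) ^ (m + 1) * f (ι k 1) := by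
      rw [qpow_left e4' (m + 1), inv_pow, hβ, inv_one, one_smul]
    have c2 : f (ι k 2) * f (ι k 3) ^ (m + 1) = f (ι k 3) ^ (m + 1) * f (ι k 2) := by
      rw [qpow_left e2' (m + 1), inv_pow, hα, inv_one, one_smul]
    have c3 : f (ι k 3) * f (ι k 3) ^ (m + 1) = f (ι k 3) ^ (m + 1) * f (ι k 3) :=
      (Commute.refl _).pow_right (m + 1)
    refine hcen _ fun i => ?_
    fin_cases i
    exacts [c0, c1, c2, c3]
end

section
/- In the algebra U_q⁺(B₂), assuming q⁴ ≠ 1, for every integer k ≥ 2 the following identity holds: e₂ᵏ·e₁ = q^{-2k}·e₁·e₂ᵏ − q⁻²·B_k·e₃·e₂ᵏ⁻¹ − C_k·z·e₂ᵏ⁻², where B_k = (q^{2k} − q^{-2k})/(q² − q⁻²) and C_k = q^{-2(k-1)}·(q^{2k} − 1)(q^{2(k-1)} − 1)/((q⁴ − 1)(q² − 1)). -/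
/-!
Left multiplication by `e₂` moves past `e₁` at the cost of an `e₃`-term, past `e₃` at the cost
of a `z`-term, and commutes with `z`. Hence `e₂ⁿ e₁` stays in the span of `e₁ e₂ⁿ`, `e₃ e₂ⁿ⁻¹`
and `z e₂ⁿ⁻²`, and with `s = q⁻²`, `t = q²` its coefficients obey the linear recurrences
`βₙ₊₁ = t βₙ + sⁿ⁺¹`, `γₙ₊₁ = γₙ + βₙ`, whose solutions are the closed forms `q⁻² Bₙ` and `Cₙ`.
-/

open FreeAlgebra

/-- The defining relations of `U_q⁺(B₂)`: generators `0 ↦ e₁`, `1 ↦ e₂`, `2 ↦ e₃`,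
`3 ↦ z` subject to `eᵢz = zeᵢ`, `e₁e₃ = q⁻²e₃e₁`, `e₂e₁ = q⁻²e₁e₂ - q⁻²e₃`,
`e₂e₃ = q²e₃e₂ + z`. -/
inductive UqB2Rel (k : Type*) [Field k] (q : k) :
    FreeAlgebra k (Fin 4) → FreeAlgebra k (Fin 4) → Prop
  | e1z : UqB2Rel k q (ι k (0 : Fin 4) * ι k (3 : Fin 4)) (ι k (3 : Fin 4) * ι k (0 : Fin 4))
  | e2z : UqB2Rel k q (ι k (1 : Fin 4) * ι k (3 : Fin 4)) (ι k (3 : Fin 4) * ι k (1 : Fin 4))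
  | e3z : UqB2Rel k q (ι k (2 : Fin 4) * ι k (3 : Fin 4)) (ι k (3 : Fin 4) * ι k (2 : Fin 4))
  | e1e3 : UqB2Rel k q (ι k (0 : Fin 4) * ι k (2 : Fin 4))
      ((q ^ 2)⁻¹ • (ι k (2 : Fin 4) * ι k (0 : Fin 4)))
  | e2e1 : UqB2Rel k q (ι k (1 : Fin 4) * ι k (0 : Fin 4))
      ((q ^ 2)⁻¹ • (ι k (0 : Fin 4) * ι k (1 : Fin 4)) - (q ^ 2)⁻¹ • ι k (2 : Fin 4))
  | e2e3 : UqB2Rel k q (ι k (1 : Fin 4) * ι k (2 : Fin 4))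
      (q ^ 2 • (ι k (2 : Fin 4) * ι k (1 : Fin 4)) + ι k (3 : Fin 4))

namespace UqB2

section Coefficients

variable {R : Type*} [CommRing R]

def e3Coeff (s t : R) : ℕ → R
  | 0 => 0
  | n + 1 => t * e3Coeff s t n + s ^ (n + 1)

def zCoeff (s t : R) : ℕ → R
  | 0 => 0
  | n + 1 => zCoeff s t n + e3Coeff s t n

end Coefficients

section Commutation

variable {R A : Type*} [CommRing R] [Ring A] [Algebra R A] {s t : R} {e₁ e₂ e₃ z : A}

theorem pow_add_two_mul_eq (h₂₁ : e₂ * e₁ = s • (e₁ * e₂) - s • e₃)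
    (h₂₃ : e₂ * e₃ = t • (e₃ * e₂) + z) (h₂z : Commute e₂ z) (n : ℕ) :
    e₂ ^ (n + 2) * e₁ = s ^ (n + 2) • (e₁ * e₂ ^ (n + 2)) -
      e3Coeff s t (n + 2) • (e₃ * e₂ ^ (n + 1)) - zCoeff s t (n + 2) • (z * e₂ ^ n) := by
  have mul_e₁ (j : ℕ) : e₂ * (e₁ * e₂ ^ j) = s • (e₁ * e₂ ^ (j + 1)) - s • (e₃ * e₂ ^ j) := by
    rw [← mul_assoc, h₂₁, sub_mul, smul_mul_assoc, smul_mul_assoc, mul_assoc, ← pow_succ']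
  have mul_e₃ (j : ℕ) : e₂ * (e₃ * e₂ ^ j) = t • (e₃ * e₂ ^ (j + 1)) + z * e₂ ^ j := by
    rw [← mul_assoc, h₂₃, add_mul, smul_mul_assoc, mul_assoc, ← pow_succ']
  have mul_z (j : ℕ) : e₂ * (z * e₂ ^ j) = z * e₂ ^ (j + 1) := by
    rw [← mul_assoc, h₂z.eq, mul_assoc, ← pow_succ']
  induction n with
  | zero =>
    have h : e₂ ^ 2 * e₁ = e₂ * (e₂ * (e₁ * e₂ ^ 0)) := by
      simp only [pow_two, pow_zero, mul_one, mul_assoc]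
    rw [h, mul_e₁, mul_sub, mul_smul_comm, mul_smul_comm, mul_e₁, mul_e₃]
    simp only [e3Coeff, zCoeff]
    module
  | succ n ih =>
    conv_lhs => rw [pow_succ', mul_assoc, ih, mul_sub, mul_sub, mul_smul_comm, mul_smul_comm,
      mul_smul_comm, mul_e₁, mul_e₃, mul_z]
    simp only [e3Coeff, zCoeff]
    module

end Commutation

section ClosedForms

variable {k : Type*} [Field k] {t : k}

theorem sub_inv_ne_zero (ht : t ≠ 0) (ht2 : t ^ 2 ≠ 1) : t - t⁻¹ ≠ 0 := by
  have h : t ^ 2 - 1 = t * (t - t⁻¹) := by field_simp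
  exact right_ne_zero_of_mul (h ▸ sub_ne_zero.mpr ht2)

theorem e3Coeff_inv (ht : t ≠ 0) (ht2 : t ^ 2 ≠ 1) (n : ℕ) :
    e3Coeff t⁻¹ t n = t⁻¹ * ((t ^ n - (t ^ n)⁻¹) / (t - t⁻¹)) := by
  have := sub_inv_ne_zero ht ht2
  induction n with
  | zero => simp [e3Coeff]
  | succ n ih =>
    rw [e3Coeff, ih, inv_pow]
    field_simp
    ring

theorem zCoeff_inv_succ (ht : t ≠ 0) (ht2 : t ^ 2 ≠ 1) (n : ℕ) :
    zCoeff t⁻¹ t (n + 1) =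
      (t ^ n)⁻¹ * ((t ^ (n + 1) - 1) * (t ^ n - 1)) / ((t ^ 2 - 1) * (t - 1)) := by
  have h1 : t - 1 ≠ 0 := by rw [sub_ne_zero]; rintro rfl; simp at ht2
  have h2 : t ^ 2 - 1 ≠ 0 := sub_ne_zero.mpr ht2
  have := sub_inv_ne_zero ht ht2
  induction n with
  | zero => simp [zCoeff, e3Coeff]
  | succ n ih =>
    rw [zCoeff, ih, e3Coeff_inv ht ht2]
    field_simp
    ring

end ClosedForms

section Relations

variable (k : Type*) [Field k] (q : k)

local notation "𝔢" i => RingQuot.mkAlgHom k (UqB2Rel k q) (ι k (i : Fin 4))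

theorem e2_mul_e1 : (𝔢 1) * (𝔢 0) = (q ^ 2)⁻¹ • ((𝔢 0) * (𝔢 1)) - (q ^ 2)⁻¹ • (𝔢 2) := by
  simpa using RingQuot.mkAlgHom_rel k (UqB2Rel.e2e1 (k := k) (q := q))

theorem e2_mul_e3 : (𝔢 1) * (𝔢 2) = q ^ 2 • ((𝔢 2) * (𝔢 1)) + (𝔢 3) := by
  simpa using RingQuot.mkAlgHom_rel k (UqB2Rel.e2e3 (k := k) (q := q))

theorem commute_e2_z : Commute (𝔢 1) (𝔢 3) :=
  commute_iff_eq _ _ |>.mpr <| by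
    simpa using RingQuot.mkAlgHom_rel k (UqB2Rel.e2z (k := k) (q := q))

end Relations

end UqB2

/-- In `U_q⁺(B₂)` with `q⁴ ≠ 1`, for every `m ≥ 2`:
`e₂ᵐ e₁ = q^{-2m} e₁ e₂ᵐ - q⁻² B_m e₃ e₂ᵐ⁻¹ - C_m z e₂ᵐ⁻²`, where
`B_m = (q^{2m} - q^{-2m})/(q² - q⁻²)` and
`C_m = q^{-2(m-1)} (q^{2m} - 1)(q^{2(m-1)} - 1)/((q⁴ - 1)(q² - 1))`. -/
theorem uqb2_identity_e2k_e1 (k : Type*) [Field k] (q : k) (hq : q ≠ 0)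
    (hq4 : q ^ 4 ≠ 1) (m : ℕ) (hm : 2 ≤ m) :
    let e1 := RingQuot.mkAlgHom k (UqB2Rel k q) (ι k (0 : Fin 4))
    let e2 := RingQuot.mkAlgHom k (UqB2Rel k q) (ι k (1 : Fin 4))
    let e3 := RingQuot.mkAlgHom k (UqB2Rel k q) (ι k (2 : Fin 4))
    let z := RingQuot.mkAlgHom k (UqB2Rel k q) (ι k (3 : Fin 4))
    let B : k := (q ^ (2 * m) - (q ^ (2 * m))⁻¹) / (q ^ 2 - (q ^ 2)⁻¹)
    let C : k := (q ^ (2 * (m - 1)))⁻¹ *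
      ((q ^ (2 * m) - 1) * (q ^ (2 * (m - 1)) - 1)) / ((q ^ 4 - 1) * (q ^ 2 - 1))
    e2 ^ m * e1 = ((q ^ 2)⁻¹) ^ m • (e1 * e2 ^ m) -
        ((q ^ 2)⁻¹ * B) • (e3 * e2 ^ (m - 1)) - C • (z * e2 ^ (m - 2)) := by
  intro e1 e2 e3 z B C
  obtain ⟨n, rfl⟩ : ∃ n, m = n + 2 := ⟨m - 2, by omega⟩
  have ht : q ^ 2 ≠ 0 := pow_ne_zero 2 hq
  have ht2 : (q ^ 2) ^ 2 ≠ 1 := by rwa [← pow_mul]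
  have hB : (q ^ 2)⁻¹ * B = UqB2.e3Coeff (q ^ 2)⁻¹ (q ^ 2) (n + 2) := by
    rw [UqB2.e3Coeff_inv ht ht2, ← pow_mul]
  have hC : C = UqB2.zCoeff (q ^ 2)⁻¹ (q ^ 2) (n + 2) := by
    rw [UqB2.zCoeff_inv_succ ht ht2, ← pow_mul, ← pow_mul, ← pow_mul]
    rfl
  rw [hB, hC, Nat.add_sub_cancel]
  exact UqB2.pow_add_two_mul_eq (UqB2.e2_mul_e1 k q) (UqB2.e2_mul_e3 k q) (UqB2.commute_e2_z k q) n
end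

section
/- If q is a primitive l-th root of unity in k with l ≥ 5, then in the algebra U_q⁺(B₂) the elements z, e₁ˡ, e₂ˡ, and e₃ˡ are central. -/
open FreeAlgebra

/-!
For fixed `x`, right and left multiplication `R`, `L` by `x` commute, and `y ↦ y x - c x y` is
the operator `R - c L`. For generators `x ≠ y`, the relations (and centrality of `z`) send `y` to
`0` along a chain of such operators with distinct `cᵢ ∈ {1, q², q⁻²}`, all `l`-th roots of unity;
so `∏ (R - cᵢ L)` kills `y`. Since `∏ (T - cᵢ)` divides `T ^ l - 1` in `k[T]`, homogenizing shows
that `∏ (R - cᵢ L)` divides `R ^ l - L ^ l`, which therefore kills `y`: `y` commutes with `x ^ l`.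
The longest chain, `e₁ ↦ e₃ ↦ z ↦ 0` for `x = e₂`, needs `q² ≠ q⁻²`; this is where `l ≥ 5`
enters.
-/

open Polynomial in
theorem prod_X_sub_C_dvd_X_pow_sub_one {K : Type*} [Field K] {s : Finset K} {n : ℕ}
    (hs : ∀ c ∈ s, c ^ n = 1) : ∏ c ∈ s, (X - C c) ∣ X ^ n - 1 :=
  Finset.prod_dvd_of_coprime ((pairwise_coprime_X_sub_C Function.injective_id).set_pairwise _)
    fun c hc => dvd_iff_isRoot.mpr (by simp [hs c hc])

open Polynomial in
theorem prod_sub_smul_dvd_pow_sub_pow {K B : Type*} [Field K] [CommRing B] [Algebra K B]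
    {s : Finset K} {n : ℕ} (hs : ∀ c ∈ s, c ^ n = 1) (a b : B) :
    ∏ c ∈ s, (a - c • b) ∣ a ^ n - b ^ n := by
  have h := homogenize_dvd (prod_X_sub_C_dvd_X_pow_sub_one hs)
  rw [← C_1, natDegree_X_pow_sub_C, natDegree_prod_of_monic _ _ fun c _ => monic_X_sub_C c,
    homogenize_finsetProd fun c _ => le_rfl] at h
  simpa [Algebra.smul_def] using map_dvd (MvPolynomial.aeval ![a, b]) h

section QCommutator

open LinearMap

variable {K A : Type*} [Field K] [Ring A] [Algebra K A]

def qCommutator (c : K) (x : A) : Module.End K A :=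
  mulRight K x - c • mulLeft K x

theorem qCommutator_apply (c : K) (x y : A) : qCommutator c x y = y * x - c • (x * y) := rfl

theorem qCommutator_one_apply_of_mem_center (x : A) {z : A} (hz : z ∈ Subalgebra.center K A) :
    qCommutator (1 : K) x z = 0 := by
  rw [qCommutator_apply, one_smul, Subalgebra.mem_center_iff.mp hz, sub_self]

open scoped IsMulCommutative in
theorem commute_pow_of_prod_qCommutator_apply_eq_zero {s : List K} (hs : s.Nodup) {n : ℕ}
    (hroots : ∀ c ∈ s, c ^ n = 1) {x y : A} (h : (s.map fun c => qCommutator c x).prod y = 0) :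
    Commute (x ^ n) y := by
  classical
  let B := Algebra.adjoin K {mulRight K x, mulLeft K x}
  have : IsMulCommutative B := Algebra.isMulCommutative_adjoin K <| by
    have hLR := (commute_mulLeft_right (R := K) x x).eq
    simp only [Set.mem_insert_iff, Set.mem_singleton_iff]
    rintro a (rfl | rfl) b (rfl | rfl) <;> first | rfl | exact hLR | exact hLR.symm
  let r : B := ⟨mulRight K x, Algebra.subset_adjoin (by simp)⟩
  let l : B := ⟨mulLeft K x, Algebra.subset_adjoin (by simp)⟩
  obtain ⟨p, hp⟩ := prod_sub_smul_dvd_pow_sub_pow (s := s.toFinset) (by simpa using hroots) r l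
  rw [List.prod_toFinset _ hs, mul_comm] at hp
  have hfactor : mulRight K x ^ n - mulLeft K x ^ n = p * (s.map fun c => qCommutator c x).prod := by
    have := congrArg B.val hp
    simp only [map_sub, map_pow, map_mul, map_list_prod, List.map_map, Subalgebra.coe_val] at this
    exact this
  have := LinearMap.congr_fun hfactor y
  simp only [pow_mulRight, pow_mulLeft, LinearMap.sub_apply, mulRight_apply, mulLeft_apply,
    Module.End.mul_apply, h, map_zero, sub_eq_zero] at this
  exact this.symm

end QCommutator

theorem RingQuot.mem_center_of_forall_commute_ι {R X : Type*} [CommSemiring R]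
    {r : FreeAlgebra R X → FreeAlgebra R X → Prop} {a : RingQuot r}
    (h : ∀ i, Commute a (RingQuot.mkAlgHom R r (ι R i))) :
    a ∈ Subalgebra.center R (RingQuot r) := by
  rw [Subalgebra.mem_center_iff]
  intro b
  obtain ⟨f, rfl⟩ := RingQuot.mkAlgHom_surjective R r b
  show Commute (RingQuot.mkAlgHom R r f) a
  induction f using FreeAlgebra.induction with
  | grade0 c =>
    rw [AlgHom.commutes]
    exact Algebra.commutes c a
  | grade1 i => exact (h i).symm
  | mul f g hf hg =>
    rw [map_mul]
    exact hf.mul_left hg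
  | add f g hf hg =>
    rw [map_add]
    exact hf.add_left hg

theorem IsPrimitiveRoot.pow_pow_eq_one {M : Type*} [CommMonoid M] {ζ : M} {k : ℕ}
    (h : IsPrimitiveRoot ζ k) (m : ℕ) : (ζ ^ m) ^ k = 1 := by
  rw [pow_right_comm, h.pow_eq_one, one_pow]

theorem IsPrimitiveRoot.inv_sq_ne_sq {G : Type*} [CommGroupWithZero G] {ζ : G} {k : ℕ}
    (h : IsPrimitiveRoot ζ k) (hk : 4 < k) : (ζ ^ 2)⁻¹ ≠ ζ ^ 2 := by
  intro h'
  have h4 := mul_inv_cancel₀ (pow_ne_zero 2 (h.ne_zero (by omega : k ≠ 0)))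
  rw [h', ← pow_add] at h4
  exact h.pow_ne_one_of_pos_of_lt four_ne_zero hk h4

namespace UqB2

variable (k : Type*) [Field k] (q : k)

abbrev gen (i : Fin 4) : RingQuot (UqB2Rel k q) := RingQuot.mkAlgHom k (UqB2Rel k q) (ι k i)

theorem gen_zero_mul_gen_three : gen k q 0 * gen k q 3 = gen k q 3 * gen k q 0 := by
  simpa only [map_mul] using RingQuot.mkAlgHom_rel k (UqB2Rel.e1z (q := q))

theorem gen_one_mul_gen_three : gen k q 1 * gen k q 3 = gen k q 3 * gen k q 1 := by
  simpa only [map_mul] using RingQuot.mkAlgHom_rel k (UqB2Rel.e2z (q := q))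

theorem gen_two_mul_gen_three : gen k q 2 * gen k q 3 = gen k q 3 * gen k q 2 := by
  simpa only [map_mul] using RingQuot.mkAlgHom_rel k (UqB2Rel.e3z (q := q))

theorem gen_zero_mul_gen_two : gen k q 0 * gen k q 2 = (q ^ 2)⁻¹ • (gen k q 2 * gen k q 0) := by
  simpa only [map_mul, map_smul] using RingQuot.mkAlgHom_rel k (UqB2Rel.e1e3 (q := q))

theorem gen_one_mul_gen_zero :
    gen k q 1 * gen k q 0 = (q ^ 2)⁻¹ • (gen k q 0 * gen k q 1) - (q ^ 2)⁻¹ • gen k q 2 := by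
  simpa only [map_mul, map_smul, map_sub] using RingQuot.mkAlgHom_rel k (UqB2Rel.e2e1 (q := q))

theorem gen_one_mul_gen_two :
    gen k q 1 * gen k q 2 = q ^ 2 • (gen k q 2 * gen k q 1) + gen k q 3 := by
  simpa only [map_mul, map_smul, map_add] using RingQuot.mkAlgHom_rel k (UqB2Rel.e2e3 (q := q))

theorem commute_gen_three (i : Fin 4) : Commute (gen k q 3) (gen k q i) := by
  fin_cases i
  · exact (gen_zero_mul_gen_three k q).symm
  · exact (gen_one_mul_gen_three k q).symm
  · exact (gen_two_mul_gen_three k q).symm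
  · exact Commute.refl _

theorem gen_three_mem_center : gen k q 3 ∈ Subalgebra.center k (RingQuot (UqB2Rel k q)) :=
  RingQuot.mem_center_of_forall_commute_ι (commute_gen_three k q)

variable {k q}

theorem qCommutator_gen_zero_gen_one :
    qCommutator (q ^ 2)⁻¹ (gen k q 0) (gen k q 1) = -((q ^ 2)⁻¹ • gen k q 2) := by
  rw [qCommutator_apply, gen_one_mul_gen_zero, sub_sub_cancel_left]

theorem qCommutator_gen_zero_gen_two (hq : q ≠ 0) :
    qCommutator (q ^ 2) (gen k q 0) (gen k q 2) = 0 := by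
  rw [qCommutator_apply, gen_zero_mul_gen_two, smul_smul, mul_inv_cancel₀ (pow_ne_zero 2 hq),
    one_smul, sub_self]

theorem qCommutator_gen_one_gen_zero (hq : q ≠ 0) :
    qCommutator (q ^ 2) (gen k q 1) (gen k q 0) = gen k q 2 := by
  rw [qCommutator_apply, gen_one_mul_gen_zero, smul_sub, smul_smul, smul_smul,
    mul_inv_cancel₀ (pow_ne_zero 2 hq), one_smul, one_smul, sub_sub_cancel]

theorem qCommutator_gen_one_gen_two (hq : q ≠ 0) :
    qCommutator (q ^ 2)⁻¹ (gen k q 1) (gen k q 2) = -((q ^ 2)⁻¹ • gen k q 3) := by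
  rw [qCommutator_apply, gen_one_mul_gen_two, smul_add, smul_smul,
    inv_mul_cancel₀ (pow_ne_zero 2 hq), one_smul, sub_add_cancel_left]

theorem qCommutator_gen_two_gen_zero : qCommutator (q ^ 2)⁻¹ (gen k q 2) (gen k q 0) = 0 := by
  rw [qCommutator_apply, gen_zero_mul_gen_two, sub_self]

theorem qCommutator_gen_two_gen_one : qCommutator (q ^ 2) (gen k q 2) (gen k q 1) = gen k q 3 := by
  rw [qCommutator_apply, gen_one_mul_gen_two, add_sub_cancel_left]

variable {l : ℕ}

theorem gen_zero_pow_mem_center (hl : 5 ≤ l) (hq : IsPrimitiveRoot q l) :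
    gen k q 0 ^ l ∈ Subalgebra.center k (RingQuot (UqB2Rel k q)) := by
  have hq0 := hq.ne_zero (by omega)
  refine RingQuot.mem_center_of_forall_commute_ι fun i => ?_
  fin_cases i
  · exact (Commute.refl _).pow_left l
  · exact commute_pow_of_prod_qCommutator_apply_eq_zero (s := [q ^ 2, (q ^ 2)⁻¹])
      (by simp [(hq.inv_sq_ne_sq (by omega)).symm]) (by simp [hq.pow_pow_eq_one])
      (by simp [qCommutator_gen_zero_gen_one, qCommutator_gen_zero_gen_two hq0])
  · exact commute_pow_of_prod_qCommutator_apply_eq_zero (s := [q ^ 2]) (by simp)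
      (by simp [hq.pow_pow_eq_one]) (by simp [qCommutator_gen_zero_gen_two hq0])
  · exact Subalgebra.mem_center_iff.mp (gen_three_mem_center k q) _

theorem gen_one_pow_mem_center (hl : 5 ≤ l) (hq : IsPrimitiveRoot q l) :
    gen k q 1 ^ l ∈ Subalgebra.center k (RingQuot (UqB2Rel k q)) := by
  have hq0 := hq.ne_zero (by omega)
  have h1 := hq.pow_ne_one_of_pos_of_lt two_ne_zero (by omega)
  refine RingQuot.mem_center_of_forall_commute_ι fun i => ?_
  fin_cases i
  · exact commute_pow_of_prod_qCommutator_apply_eq_zero (s := [1, (q ^ 2)⁻¹, q ^ 2])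
      (by simp [h1.symm, (inv_ne_one.mpr h1).symm, hq.inv_sq_ne_sq (by omega)])
      (by simp [hq.pow_pow_eq_one])
      (by simp [qCommutator_gen_one_gen_zero hq0, qCommutator_gen_one_gen_two hq0,
        qCommutator_one_apply_of_mem_center _ (gen_three_mem_center k q)])
  · exact (Commute.refl _).pow_left l
  · exact commute_pow_of_prod_qCommutator_apply_eq_zero (s := [1, (q ^ 2)⁻¹])
      (by simp [(inv_ne_one.mpr h1).symm]) (by simp [hq.pow_pow_eq_one])
      (by simp [qCommutator_gen_one_gen_two hq0,
        qCommutator_one_apply_of_mem_center _ (gen_three_mem_center k q)])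
  · exact Subalgebra.mem_center_iff.mp (gen_three_mem_center k q) _

theorem gen_two_pow_mem_center (hl : 5 ≤ l) (hq : IsPrimitiveRoot q l) :
    gen k q 2 ^ l ∈ Subalgebra.center k (RingQuot (UqB2Rel k q)) := by
  have h1 := hq.pow_ne_one_of_pos_of_lt two_ne_zero (by omega)
  refine RingQuot.mem_center_of_forall_commute_ι fun i => ?_
  fin_cases i
  · exact commute_pow_of_prod_qCommutator_apply_eq_zero (s := [(q ^ 2)⁻¹]) (by simp)
      (by simp [hq.pow_pow_eq_one]) (by simp [qCommutator_gen_two_gen_zero])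
  · exact commute_pow_of_prod_qCommutator_apply_eq_zero (s := [1, q ^ 2])
      (by simp [h1.symm]) (by simp [hq.pow_pow_eq_one])
      (by simp [qCommutator_gen_two_gen_one,
        qCommutator_one_apply_of_mem_center _ (gen_three_mem_center k q)])
  · exact (Commute.refl _).pow_left l
  · exact Subalgebra.mem_center_iff.mp (gen_three_mem_center k q) _

end UqB2

/-- If `q` is a primitive `l`-th root of unity with `l ≥ 5`, then in
`U_q⁺(B₂)` the elements `z`, `e₁ˡ`, `e₂ˡ`, `e₃ˡ` are central. -/
theorem uqb2_central_powers (k : Type*) [Field k] (q : k)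
    (l : ℕ) (hl : 5 ≤ l) (hq : IsPrimitiveRoot q l) :
    let e1 := RingQuot.mkAlgHom k (UqB2Rel k q) (ι k (0 : Fin 4))
    let e2 := RingQuot.mkAlgHom k (UqB2Rel k q) (ι k (1 : Fin 4))
    let e3 := RingQuot.mkAlgHom k (UqB2Rel k q) (ι k (2 : Fin 4))
    let z := RingQuot.mkAlgHom k (UqB2Rel k q) (ι k (3 : Fin 4))
    z ∈ Subalgebra.center k (RingQuot (UqB2Rel k q)) ∧
    e1 ^ l ∈ Subalgebra.center k (RingQuot (UqB2Rel k q)) ∧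
    e2 ^ l ∈ Subalgebra.center k (RingQuot (UqB2Rel k q)) ∧
    e3 ^ l ∈ Subalgebra.center k (RingQuot (UqB2Rel k q)) :=
  ⟨UqB2.gen_three_mem_center k q, UqB2.gen_zero_pow_mem_center hl hq,
    UqB2.gen_one_pow_mem_center hl hq, UqB2.gen_two_pow_mem_center hl hq⟩
end

section
/- Suppose h is a nonzero element of k with hˡ = 1 for some positive integer l. Then in the algebra B(h), setting u := x₁x₂, s := x₁² + x₂², v := y₁y₂, and t := y₁² + y₂², the elements u^{2l}, sˡ, v^{2l}, and tˡ are central. -/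
open FreeAlgebra

/-- The defining relations of the algebra `B(h)`: generators `0 ↦ x₁`, `1 ↦ x₂`,
`2 ↦ y₁`, `3 ↦ y₂`. -/
inductive BhRel (k : Type*) [Field k] (h : k) :
    FreeAlgebra k (Fin 4) → FreeAlgebra k (Fin 4) → Prop
  | x2x1 : BhRel k h (ι k (1 : Fin 4) * ι k (0 : Fin 4)) (-(ι k (0 : Fin 4) * ι k (1 : Fin 4)))
  | y2y1 : BhRel k h (ι k (3 : Fin 4) * ι k (2 : Fin 4)) (-(ι k (2 : Fin 4) * ι k (3 : Fin 4)))
  | y1x1 : BhRel k h (ι k (2 : Fin 4) * ι k (0 : Fin 4))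
      (h • (ι k (0 : Fin 4) * ι k (2 : Fin 4) + ι k (1 : Fin 4) * ι k (2 : Fin 4) +
        ι k (0 : Fin 4) * ι k (3 : Fin 4)))
  | y1x2 : BhRel k h (ι k (2 : Fin 4) * ι k (1 : Fin 4))
      (h • (ι k (0 : Fin 4) * ι k (3 : Fin 4)))
  | y2x1 : BhRel k h (ι k (3 : Fin 4) * ι k (0 : Fin 4))
      (h • (ι k (1 : Fin 4) * ι k (2 : Fin 4)))
  | y2x2 : BhRel k h (ι k (3 : Fin 4) * ι k (1 : Fin 4))
      (h • (-(ι k (1 : Fin 4) * ι k (2 : Fin 4)) - ι k (0 : Fin 4) * ι k (3 : Fin 4) +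
        ι k (1 : Fin 4) * ι k (3 : Fin 4)))

section Abstract

variable {k B : Type*} [Field k] [Ring B] [Algebra k B] {h : k} {X1 X2 Y1 Y2 : B}

/-- If `g * e = c • (e * g)` then `g * e ^ n = c ^ n • (e ^ n * g)`. -/
lemma Bh_aux_comm_pow (c : k) (g e : B) (hge : g * e = c • (e * g)) :
    ∀ n : ℕ, g * e ^ n = c ^ n • (e ^ n * g) := by
  intro n
  induction n with
  | zero => simp
  | succ n ih =>
    rw [pow_succ', pow_succ', ← mul_assoc, hge, smul_mul_assoc, mul_assoc, ih,
      mul_smul_comm, smul_smul, ← pow_succ', pow_succ', mul_assoc]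

/-- If `e * g = c • (g * e)` then `e ^ n * g = c ^ n • (g * e ^ n)`. -/
lemma Bh_aux_comm_pow' (c : k) (g e : B) (hge : e * g = c • (g * e)) :
    ∀ n : ℕ, e ^ n * g = c ^ n • (g * e ^ n) := by
  intro n
  induction n with
  | zero => simp
  | succ n ih =>
    rw [pow_succ, pow_succ, mul_assoc, hge, mul_smul_comm, ← mul_assoc, ih,
      smul_mul_assoc, smul_smul, mul_comm c, mul_assoc]

variable (Rx : X2 * X1 = -(X1 * X2)) (Ry : Y2 * Y1 = -(Y1 * Y2))
  (R11 : Y1 * X1 = h • (X1 * Y1 + X2 * Y1 + X1 * Y2))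
  (R12 : Y1 * X2 = h • (X1 * Y2))
  (R21 : Y2 * X1 = h • (X2 * Y1))
  (R22 : Y2 * X2 = h • (-(X2 * Y1) - X1 * Y2 + X2 * Y2))

section
include Rx

lemma Bh_Rx' (c : B) : X2 * (X1 * c) = -(X1 * (X2 * c)) := by
  rw [← mul_assoc, Rx, neg_mul, mul_assoc]

lemma Bh_ux1 : X1 * (X1 * X2) = (-1 : k) • (X1 * X2 * X1) := by
  rw [mul_assoc, Rx]; simp [mul_assoc]

lemma Bh_ux2 : X2 * (X1 * X2) = (-1 : k) • (X1 * X2 * X2) := by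
  rw [Bh_Rx' Rx]; simp [mul_assoc]

lemma Bh_sx1 : X1 * (X1 ^ 2 + X2 ^ 2) = (1 : k) • ((X1 ^ 2 + X2 ^ 2) * X1) := by
  simp only [one_smul, pow_two, mul_add, add_mul, mul_assoc, Bh_Rx' Rx, Rx,
    neg_mul, mul_neg, neg_neg]

lemma Bh_sx2 : X2 * (X1 ^ 2 + X2 ^ 2) = (1 : k) • ((X1 ^ 2 + X2 ^ 2) * X2) := by
  simp only [one_smul, pow_two, mul_add, add_mul, mul_assoc, Bh_Rx' Rx, Rx,
    neg_mul, mul_neg, neg_neg]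

end

section
include Ry

lemma Bh_Ry' (c : B) : Y2 * (Y1 * c) = -(Y1 * (Y2 * c)) := by
  rw [← mul_assoc, Ry, neg_mul, mul_assoc]

lemma Bh_vy1 : Y1 * (Y1 * Y2) = (-1 : k) • (Y1 * Y2 * Y1) := by
  rw [mul_assoc, Ry]; simp [mul_assoc]

lemma Bh_vy2 : Y2 * (Y1 * Y2) = (-1 : k) • (Y1 * Y2 * Y2) := by
  rw [Bh_Ry' Ry]; simp [mul_assoc]

lemma Bh_ty1 : (Y1 ^ 2 + Y2 ^ 2) * Y1 = (1 : k) • (Y1 * (Y1 ^ 2 + Y2 ^ 2)) := by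
  simp only [one_smul, pow_two, mul_add, add_mul, mul_assoc, Bh_Ry' Ry, Ry,
    neg_mul, mul_neg, neg_neg]

lemma Bh_ty2 : (Y1 ^ 2 + Y2 ^ 2) * Y2 = (1 : k) • (Y2 * (Y1 ^ 2 + Y2 ^ 2)) := by
  simp only [one_smul, pow_two, mul_add, add_mul, mul_assoc, Bh_Ry' Ry, Ry,
    neg_mul, mul_neg, neg_neg]

end

section
include R11
lemma Bh_R11' (c : B) :
    Y1 * (X1 * c) = h • (X1 * (Y1 * c) + X2 * (Y1 * c) + X1 * (Y2 * c)) := by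
  rw [← mul_assoc, R11, smul_mul_assoc, add_mul, add_mul, mul_assoc, mul_assoc, mul_assoc]
end

section
include R12
lemma Bh_R12' (c : B) : Y1 * (X2 * c) = h • (X1 * (Y2 * c)) := by
  rw [← mul_assoc, R12, smul_mul_assoc, mul_assoc]
end

section
include R21
lemma Bh_R21' (c : B) : Y2 * (X1 * c) = h • (X2 * (Y1 * c)) := by
  rw [← mul_assoc, R21, smul_mul_assoc, mul_assoc]
end

section
include R22
lemma Bh_R22' (c : B) :
    Y2 * (X2 * c) = h • (-(X2 * (Y1 * c)) - X1 * (Y2 * c) + X2 * (Y2 * c)) := by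
  rw [← mul_assoc, R22, smul_mul_assoc, add_mul, sub_mul, neg_mul,
    mul_assoc, mul_assoc, mul_assoc]
end

include Rx Ry R11 R12 R21 R22

lemma Bh_uy1 : Y1 * (X1 * X2) = (-(h ^ 2)) • (X1 * X2 * Y1) := by
  rw [Bh_R11' R11 X2]
  simp only [R12, R22, Rx, Bh_Rx' Rx, mul_smul_comm, smul_smul, smul_add, smul_sub,
    smul_neg, mul_add, mul_sub, mul_neg, mul_assoc]
  module

lemma Bh_uy2 : Y2 * (X1 * X2) = (-(h ^ 2)) • (X1 * X2 * Y2) := by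
  rw [Bh_R21' R21 X2, R12, mul_smul_comm, smul_smul, Bh_Rx' Rx]
  simp only [mul_neg, smul_neg, mul_assoc]
  module

lemma Bh_sy1 : Y1 * (X1 ^ 2 + X2 ^ 2) = (h ^ 2) • ((X1 ^ 2 + X2 ^ 2) * Y1) := by
  simp only [pow_two, mul_add, add_mul, Bh_R11' R11, Bh_R12' R12, Bh_R21' R21,
    Bh_R22' R22, R11, R12, R21, R22, Bh_Rx' Rx, Rx, Bh_Ry' Ry, Ry, smul_add, smul_sub,
    smul_neg, mul_smul_comm, smul_smul, mul_add, mul_neg, mul_sub, neg_mul, mul_assoc]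
  module

lemma Bh_sy2 : Y2 * (X1 ^ 2 + X2 ^ 2) = (h ^ 2) • ((X1 ^ 2 + X2 ^ 2) * Y2) := by
  simp only [pow_two, mul_add, add_mul, Bh_R11' R11, Bh_R12' R12, Bh_R21' R21,
    Bh_R22' R22, R11, R12, R21, R22, Bh_Rx' Rx, Rx, Bh_Ry' Ry, Ry, smul_add, smul_sub,
    smul_neg, mul_smul_comm, smul_smul, mul_add, mul_neg, mul_sub, neg_mul, mul_assoc]
  module

lemma Bh_vx1 : Y1 * Y2 * X1 = (-(h ^ 2)) • (X1 * (Y1 * Y2)) := by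
  rw [mul_assoc, R21, mul_smul_comm, Bh_R12' R12, Ry, smul_smul]
  simp only [smul_neg, mul_neg]
  module

lemma Bh_vx2 : Y1 * Y2 * X2 = (-(h ^ 2)) • (X2 * (Y1 * Y2)) := by
  rw [mul_assoc, R22]
  simp only [smul_add, smul_sub, smul_neg, mul_smul_comm, Bh_R11' R11, Bh_R12' R12,
    Bh_R21' R21, Bh_R22' R22, R11, R12, R21, R22, Bh_Ry' Ry, Ry, smul_smul,
    mul_add, mul_neg, mul_sub, neg_mul, mul_assoc]
  module

lemma Bh_tx1 : (Y1 ^ 2 + Y2 ^ 2) * X1 = (h ^ 2) • (X1 * (Y1 ^ 2 + Y2 ^ 2)) := by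
  simp only [pow_two, add_mul, mul_add, mul_assoc, Bh_R11' R11, Bh_R12' R12,
    Bh_R21' R21, Bh_R22' R22, R11, R12, R21, R22, Bh_Ry' Ry, Ry, smul_add, smul_sub,
    smul_neg, mul_smul_comm, smul_smul, mul_add, mul_neg, mul_sub, neg_mul]
  module

lemma Bh_tx2 : (Y1 ^ 2 + Y2 ^ 2) * X2 = (h ^ 2) • (X2 * (Y1 ^ 2 + Y2 ^ 2)) := by
  simp only [pow_two, add_mul, mul_add, mul_assoc, Bh_R11' R11, Bh_R12' R12,
    Bh_R21' R21, Bh_R22' R22, R11, R12, R21, R22, Bh_Ry' Ry, Ry, smul_add, smul_sub,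
    smul_neg, mul_smul_comm, smul_smul, mul_add, mul_neg, mul_sub, neg_mul]
  module

end Abstract

/-- An element commuting with the four generators of `B(h)` is central. -/
lemma Bh_aux_central {k : Type*} [Field k] {h : k} (z : RingQuot (BhRel k h))
    (hz : ∀ i : Fin 4, RingQuot.mkAlgHom k (BhRel k h) (ι k i) * z
        = z * RingQuot.mkAlgHom k (BhRel k h) (ι k i)) :
    z ∈ Subalgebra.center k (RingQuot (BhRel k h)) := by
  rw [Subalgebra.mem_center_iff]
  intro b
  obtain ⟨a, rfl⟩ := RingQuot.mkAlgHom_surjective k (BhRel k h) b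
  induction a using FreeAlgebra.induction with
  | grade0 r => rw [AlgHom.commutes]; exact Algebra.commutes r z
  | grade1 i => exact hz i
  | mul a b ha hb => rw [map_mul, mul_assoc, hb, ← mul_assoc, ha, mul_assoc]
  | add a b ha hb => rw [map_add, add_mul, mul_add, ha, hb]

/-- If `h ≠ 0` and `hˡ = 1` for some positive integer `l`, then in
`B(h)`, with `u := x₁x₂`, `s := x₁² + x₂²`, `v := y₁y₂`, `t := y₁² + y₂²`, the elements
`u^{2l}`, `sˡ`, `v^{2l}`, `tˡ` are central. -/
theorem Bh_central_powers (k : Type*) [Field k] (h : k) (hh : h ≠ 0)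
    (l : ℕ) (hl : 0 < l) (hroot : h ^ l = 1) :
    let x1 := RingQuot.mkAlgHom k (BhRel k h) (ι k (0 : Fin 4))
    let x2 := RingQuot.mkAlgHom k (BhRel k h) (ι k (1 : Fin 4))
    let y1 := RingQuot.mkAlgHom k (BhRel k h) (ι k (2 : Fin 4))
    let y2 := RingQuot.mkAlgHom k (BhRel k h) (ι k (3 : Fin 4))
    let u := x1 * x2
    let s := x1 ^ 2 + x2 ^ 2
    let v := y1 * y2
    let t := y1 ^ 2 + y2 ^ 2
    u ^ (2 * l) ∈ Subalgebra.center k (RingQuot (BhRel k h)) ∧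
    s ^ l ∈ Subalgebra.center k (RingQuot (BhRel k h)) ∧
    v ^ (2 * l) ∈ Subalgebra.center k (RingQuot (BhRel k h)) ∧
    t ^ l ∈ Subalgebra.center k (RingQuot (BhRel k h)) := by
  intro x1 x2 y1 y2 u s v t
  have rel : ∀ {a b : FreeAlgebra k (Fin 4)}, BhRel k h a b →
      RingQuot.mkAlgHom k (BhRel k h) a = RingQuot.mkAlgHom k (BhRel k h) b :=
    fun hab => RingQuot.mkAlgHom_rel k hab
  have Rx : x2 * x1 = -(x1 * x2) := by
    have := rel BhRel.x2x1; simpa [x1, x2] using this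
  have Ry : y2 * y1 = -(y1 * y2) := by
    have := rel BhRel.y2y1; simpa [y1, y2] using this
  have R11 : y1 * x1 = h • (x1 * y1 + x2 * y1 + x1 * y2) := by
    have := rel BhRel.y1x1; simpa [x1, x2, y1, y2] using this
  have R12 : y1 * x2 = h • (x1 * y2) := by
    have := rel BhRel.y1x2; simpa [x1, x2, y1, y2] using this
  have R21 : y2 * x1 = h • (x2 * y1) := by
    have := rel BhRel.y2x1; simpa [x1, x2, y1, y2] using this
  have R22 : y2 * x2 = h • (-(x2 * y1) - x1 * y2 + x2 * y2) := by
    have := rel BhRel.y2x2; simpa [x1, x2, y1, y2] using this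
  -- scalar facts
  have h2l : (h ^ 2) ^ l = 1 := by
    rw [← pow_mul, mul_comm, pow_mul, hroot, one_pow]
  have h4l : ((-(h ^ 2)) ^ (2 * l)) = 1 := by
    have e : ((-(h ^ 2)) ^ (2 * l)) = h ^ (l * 4) := by
      rw [pow_mul, show (-(h ^ 2)) ^ 2 = h ^ 4 by ring, ← pow_mul, mul_comm]
    rw [e, pow_mul, hroot, one_pow]
  have h1l : ((-1 : k) ^ (2 * l)) = 1 := by
    rw [pow_mul]; norm_num
  refine ⟨?_, ?_, ?_, ?_⟩
  · apply Bh_aux_central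
    intro i
    fin_cases i
    · show x1 * u ^ (2 * l) = u ^ (2 * l) * x1
      rw [Bh_aux_comm_pow (-1 : k) x1 u (Bh_ux1 Rx) (2 * l), h1l, one_smul]
    · show x2 * u ^ (2 * l) = u ^ (2 * l) * x2
      rw [Bh_aux_comm_pow (-1 : k) x2 u (Bh_ux2 Rx) (2 * l), h1l, one_smul]
    · show y1 * u ^ (2 * l) = u ^ (2 * l) * y1
      rw [Bh_aux_comm_pow (-(h ^ 2)) y1 u (Bh_uy1 Rx Ry R11 R12 R21 R22) (2 * l),
        h4l, one_smul]
    · show y2 * u ^ (2 * l) = u ^ (2 * l) * y2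
      rw [Bh_aux_comm_pow (-(h ^ 2)) y2 u (Bh_uy2 Rx Ry R11 R12 R21 R22) (2 * l),
        h4l, one_smul]
  · apply Bh_aux_central
    intro i
    fin_cases i
    · show x1 * s ^ l = s ^ l * x1
      rw [Bh_aux_comm_pow (1 : k) x1 s (Bh_sx1 Rx) l, one_pow, one_smul]
    · show x2 * s ^ l = s ^ l * x2
      rw [Bh_aux_comm_pow (1 : k) x2 s (Bh_sx2 Rx) l, one_pow, one_smul]
    · show y1 * s ^ l = s ^ l * y1
      rw [Bh_aux_comm_pow (h ^ 2) y1 s (Bh_sy1 Rx Ry R11 R12 R21 R22) l, h2l, one_smul]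
    · show y2 * s ^ l = s ^ l * y2
      rw [Bh_aux_comm_pow (h ^ 2) y2 s (Bh_sy2 Rx Ry R11 R12 R21 R22) l, h2l, one_smul]
  · apply Bh_aux_central
    intro i
    fin_cases i
    · show x1 * v ^ (2 * l) = v ^ (2 * l) * x1
      exact (by rw [Bh_aux_comm_pow' (-(h ^ 2)) x1 v (Bh_vx1 Rx Ry R11 R12 R21 R22) (2 * l),
        h4l, one_smul] : v ^ (2 * l) * x1 = x1 * v ^ (2 * l)).symm
    · show x2 * v ^ (2 * l) = v ^ (2 * l) * x2
      exact (by rw [Bh_aux_comm_pow' (-(h ^ 2)) x2 v (Bh_vx2 Rx Ry R11 R12 R21 R22) (2 * l),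
        h4l, one_smul] : v ^ (2 * l) * x2 = x2 * v ^ (2 * l)).symm
    · show y1 * v ^ (2 * l) = v ^ (2 * l) * y1
      rw [Bh_aux_comm_pow (-1 : k) y1 v (Bh_vy1 Ry) (2 * l), h1l, one_smul]
    · show y2 * v ^ (2 * l) = v ^ (2 * l) * y2
      rw [Bh_aux_comm_pow (-1 : k) y2 v (Bh_vy2 Ry) (2 * l), h1l, one_smul]
  · apply Bh_aux_central
    intro i
    fin_cases i
    · show x1 * t ^ l = t ^ l * x1
      exact (by rw [Bh_aux_comm_pow' (h ^ 2) x1 t (Bh_tx1 Rx Ry R11 R12 R21 R22) l,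
        h2l, one_smul] : t ^ l * x1 = x1 * t ^ l).symm
    · show x2 * t ^ l = t ^ l * x2
      exact (by rw [Bh_aux_comm_pow' (h ^ 2) x2 t (Bh_tx2 Rx Ry R11 R12 R21 R22) l,
        h2l, one_smul] : t ^ l * x2 = x2 * t ^ l).symm
    · show y1 * t ^ l = t ^ l * y1
      exact (by rw [Bh_aux_comm_pow' (1 : k) y1 t (Bh_ty1 Ry) l, one_pow, one_smul] :
        t ^ l * y1 = y1 * t ^ l).symm
    · show y2 * t ^ l = t ^ l * y2
      exact (by rw [Bh_aux_comm_pow' (1 : k) y2 t (Bh_ty2 Ry) l, one_pow, one_smul] :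
        t ^ l * y2 = y2 * t ^ l).symm
end

section
/- The family of monomials {vⁱ·uʲ·wᵏ : i, j, k ∈ ℕ} is a basis of the algebra B_q(f) as a k-vector space. -/
open FreeAlgebra

/-- The defining relations of the algebra `B_q(f)` for `f = ∑_{j=0}^{d} c_j tʲ`:
generators `0 ↦ u`, `1 ↦ v`, `2 ↦ w` subject to `uv = qvu`, `wu = quw + f(v)`,
`wv = q⁻¹vw + f(u)`. -/
inductive BqfRel (k : Type*) [Field k] (q : k) (d : ℕ) (c : ℕ → k) :
    FreeAlgebra k (Fin 3) → FreeAlgebra k (Fin 3) → Prop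
  | uv : BqfRel k q d c (ι k (0 : Fin 3) * ι k (1 : Fin 3))
      (q • (ι k (1 : Fin 3) * ι k (0 : Fin 3)))
  | wu : BqfRel k q d c (ι k (2 : Fin 3) * ι k (0 : Fin 3))
      (q • (ι k (0 : Fin 3) * ι k (2 : Fin 3)) +
        ∑ j ∈ Finset.range (d + 1), c j • ι k (1 : Fin 3) ^ j)
  | wv : BqfRel k q d c (ι k (2 : Fin 3) * ι k (1 : Fin 3))
      (q⁻¹ • (ι k (1 : Fin 3) * ι k (2 : Fin 3)) +
        ∑ j ∈ Finset.range (d + 1), c j • ι k (0 : Fin 3) ^ j)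

/-!
Spanning: the span of the monomials `vⁱ uʲ wˡ` contains `1` and is stable under left
multiplication by the generators. For `u` and `v` this only needs `uv = qvu`; `w` is moved past
a leading `v` or `u` with the other two relations, whose error terms `f(u)`, `f(v)` are handled
by induction on `i`, then on `j`.

Independence: let `u`, `v`, `w` act on `k^(ℕ³)` by the formulas that left multiplication would
give on monomials. These operators satisfy the defining relations, so `B_q(f)` acts, and the
monomial `vⁱ uʲ wˡ` sends `e₀` to `e_(i,j,l)`.
-/

open Finset Finsupp Submodule

theorem Submodule.eq_top_of_one_mem_of_mul_mem {R A : Type*} [CommSemiring R] [Semiring A]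
    [Algebra R A] {s : Set A} (hs : Algebra.adjoin R s = ⊤) {M : Submodule R A} (h1 : 1 ∈ M)
    (hmul : ∀ x ∈ s, ∀ m ∈ M, x * m ∈ M) : M = ⊤ := by
  have key : ∀ y ∈ Algebra.adjoin R s, ∀ m ∈ M, y * m ∈ M := by
    intro y hy
    induction hy using Algebra.adjoin_induction with
    | mem x hx => exact hmul x hx
    | algebraMap r =>
      intro m hm
      rw [Algebra.algebraMap_eq_smul_one, smul_mul_assoc, one_mul]
      exact M.smul_mem r hm
    | add x y _ _ hx hy => intro m hm; rw [add_mul]; exact add_mem (hx m hm) (hy m hm)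
    | mul x y _ _ hx hy => intro m hm; rw [mul_assoc]; exact hx _ (hy m hm)
  refine eq_top_iff'.2 fun y => ?_
  simpa using key y (hs ▸ Algebra.mem_top) 1 h1

theorem Submodule.pow_mul_mem {R A : Type*} [Semiring R] [Semiring A] [Module R A]
    {M : Submodule R A} {x : A} (hx : ∀ m ∈ M, x * m ∈ M) (n : ℕ) : ∀ m ∈ M, x ^ n * m ∈ M := by
  induction n with
  | zero => simp
  | succ n ih => intro m hm; rw [pow_succ', mul_assoc]; exact hx _ (ih m hm)

theorem Submodule.mul_mem_span_range {R A ι : Type*} [CommSemiring R] [Semiring A] [Algebra R A]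
    {f : ι → A} {x : A} (hx : ∀ i, x * f i ∈ span R (Set.range f)) :
    ∀ m ∈ span R (Set.range f), x * m ∈ span R (Set.range f) :=
  fun _ hm => (span_le (p := (span R (Set.range f)).comap (LinearMap.mulLeft R x))).2
    (Set.range_subset_iff.2 hx) hm

noncomputable def Finsupp.weightedShift {R ι : Type*} [CommSemiring R] (g : ι → ι) (a : ι → R) :
    Module.End R (ι →₀ R) :=
  lsum R fun p => a p • lsingle (g p)

theorem Finsupp.weightedShift_single {R ι : Type*} [CommSemiring R] (g : ι → ι)
    (a : ι → R) (p : ι) (x : R) : weightedShift g a (single p x) = a p • single (g p) x := by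
  simp [weightedShift]

namespace BqfRel

variable {k : Type*} [Field k]

noncomputable def repV : Module.End k (ℕ × ℕ × ℕ →₀ k) :=
  weightedShift (fun p => (p.1 + 1, p.2.1, p.2.2)) 1

noncomputable def repU (q : k) : Module.End k (ℕ × ℕ × ℕ →₀ k) :=
  weightedShift (fun p => (p.1, p.2.1 + 1, p.2.2)) (fun p => q ^ p.1)

/- `repWLead q + ∑ₐ cₐ • (repWV q a + repWU q a)` is left multiplication by `w` on monomials,
read off from `w vⁱ = q⁻ⁱ vⁱ w + ∑ₐ cₐ (∑_{s<i} qᵃˢ q^-(i-1-s)) vⁱ⁻¹ uᵃ` and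
`w uʲ = qʲ uʲ w + ∑ₐ cₐ (∑_{t<j} q^((a+1)t)) vᵃ uʲ⁻¹`. The truncated `i - 1` and `j - 1` only
occur with an empty sum as coefficient. -/
noncomputable def repWLead (q : k) : Module.End k (ℕ × ℕ × ℕ →₀ k) :=
  weightedShift (fun p => (p.1, p.2.1, p.2.2 + 1)) (fun p => q ^ p.2.1 * q⁻¹ ^ p.1)

noncomputable def repWV (q : k) (a : ℕ) : Module.End k (ℕ × ℕ × ℕ →₀ k) :=
  weightedShift (fun p => (p.1 + a, p.2.1 - 1, p.2.2))
    (fun p => q⁻¹ ^ p.1 * ∑ t ∈ range p.2.1, (q ^ (a + 1)) ^ t)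

noncomputable def repWU (q : k) (a : ℕ) : Module.End k (ℕ × ℕ × ℕ →₀ k) :=
  weightedShift (fun p => (p.1 - 1, p.2.1 + a, p.2.2))
    (fun p => ∑ s ∈ range p.1, (q ^ a) ^ s * q⁻¹ ^ (p.1 - 1 - s))

noncomputable def repW (q : k) (d : ℕ) (c : ℕ → k) : Module.End k (ℕ × ℕ × ℕ →₀ k) :=
  repWLead q + ∑ a ∈ range (d + 1), c a • (repWV q a + repWU q a)

variable (q : k) (i j l : ℕ) (x : k)

@[simp] theorem repV_single : repV (single (i, j, l) x) = single (i + 1, j, l) x := by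
  simp [repV, weightedShift_single]

@[simp] theorem repU_single : repU q (single (i, j, l) x) = q ^ i • single (i, j + 1, l) x :=
  weightedShift_single ..

@[simp] theorem repWLead_single :
    repWLead q (single (i, j, l) x) = (q ^ j * q⁻¹ ^ i) • single (i, j, l + 1) x :=
  weightedShift_single ..

@[simp] theorem repWV_single (a : ℕ) : repWV q a (single (i, j, l) x) =
    (q⁻¹ ^ i * ∑ t ∈ range j, (q ^ (a + 1)) ^ t) • single (i + a, j - 1, l) x :=
  weightedShift_single ..

@[simp] theorem repWU_single (a : ℕ) : repWU q a (single (i, j, l) x) =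
    (∑ s ∈ range i, (q ^ a) ^ s * q⁻¹ ^ (i - 1 - s)) • single (i - 1, j + a, l) x :=
  weightedShift_single ..

theorem repV_pow_single (n : ℕ) : (repV ^ n) (single (i, j, l) x) = single (i + n, j, l) x := by
  induction n with
  | zero => simp
  | succ n ih => rw [pow_succ', Module.End.mul_apply, ih, repV_single, add_assoc]

theorem repU_pow_single (n : ℕ) :
    (repU q ^ n) (single (i, j, l) x) = q ^ (i * n) • single (i, j + n, l) x := by
  induction n with
  | zero => simp
  | succ n ih =>
    rw [pow_succ', Module.End.mul_apply, ih, map_smul, repU_single, smul_smul, ← pow_add,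
      mul_add_one, add_assoc]

theorem repU_mul_repV : repU q * repV = q • (repV * repU q) := by
  refine lhom_ext fun ⟨i, j, l⟩ x => ?_
  simp only [Module.End.mul_apply, LinearMap.smul_apply, repU_single, repV_single, map_smul]
  match_scalars
  ring

theorem repWLead_mul_repU : repWLead q * repU q = q • (repU q * repWLead q) := by
  refine lhom_ext fun ⟨i, j, l⟩ x => ?_
  simp only [Module.End.mul_apply, LinearMap.smul_apply, repU_single, repWLead_single, map_smul]
  match_scalars
  ring

theorem repWV_mul_repU {q : k} (hq : q ≠ 0) (a : ℕ) :
    repWV q a * repU q = q • (repU q * repWV q a) + repV ^ a := by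
  refine lhom_ext fun ⟨i, j, l⟩ x => ?_
  have hqi : q ^ i * q⁻¹ ^ i = 1 := by rw [← mul_pow, mul_inv_cancel₀ hq, one_pow]
  simp only [Module.End.mul_apply, LinearMap.smul_apply, LinearMap.add_apply, repU_single,
    repWV_single, repV_pow_single, map_smul, geom_sum_succ, Nat.add_sub_cancel]
  rcases j with _ | j <;>
    simp only [sum_range_zero, mul_zero, zero_smul, smul_zero, zero_add, Nat.add_sub_cancel] <;>
    match_scalars <;> linear_combination hqi

theorem repWU_mul_repU (a : ℕ) : repWU q a * repU q = q • (repU q * repWU q a) := by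
  refine lhom_ext fun ⟨i, j, l⟩ x => ?_
  simp only [Module.End.mul_apply, LinearMap.smul_apply, repU_single, repWU_single, map_smul]
  cases i with
  | zero => simp
  | succ i =>
    simp only [Nat.add_sub_cancel, add_right_comm j 1 a]
    match_scalars
    ring

theorem repWLead_mul_repV : repWLead q * repV = q⁻¹ • (repV * repWLead q) := by
  refine lhom_ext fun ⟨i, j, l⟩ x => ?_
  simp only [Module.End.mul_apply, LinearMap.smul_apply, repV_single, repWLead_single, map_smul]
  match_scalars
  ring

theorem repWV_mul_repV (a : ℕ) : repWV q a * repV = q⁻¹ • (repV * repWV q a) := by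
  refine lhom_ext fun ⟨i, j, l⟩ x => ?_
  simp only [Module.End.mul_apply, LinearMap.smul_apply, repV_single, repWV_single, map_smul,
    add_right_comm i 1 a]
  match_scalars
  ring

theorem repWU_mul_repV (a : ℕ) : repWU q a * repV = q⁻¹ • (repV * repWU q a) + repU q ^ a := by
  refine lhom_ext fun ⟨i, j, l⟩ x => ?_
  simp only [Module.End.mul_apply, LinearMap.smul_apply, LinearMap.add_apply, repV_single,
    repWU_single, repU_pow_single, map_smul, Nat.add_sub_cancel]
  rw [geom_sum₂_succ_eq]
  cases i with
  | zero => simp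
  | succ i =>
    simp only [Nat.add_sub_cancel]
    match_scalars
    ring

variable (d : ℕ) (c : ℕ → k)

theorem repW_mul_repU (hq : q ≠ 0) :
    repW q d c * repU q = q • (repU q * repW q d c) + ∑ a ∈ range (d + 1), c a • repV ^ a := by
  simp only [repW, add_mul, mul_add, Finset.sum_mul, Finset.mul_sum, smul_mul_assoc,
    mul_smul_comm, repWLead_mul_repU, repWV_mul_repU hq, repWU_mul_repU, smul_add,
    sum_add_distrib, Finset.smul_sum, smul_comm q (c _)]
  abel

theorem repW_mul_repV :
    repW q d c * repV = q⁻¹ • (repV * repW q d c) + ∑ a ∈ range (d + 1), c a • repU q ^ a := by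
  simp only [repW, add_mul, mul_add, Finset.sum_mul, Finset.mul_sum, smul_mul_assoc,
    mul_smul_comm, repWLead_mul_repV, repWV_mul_repV, repWU_mul_repV, smul_add,
    sum_add_distrib, Finset.smul_sum, smul_comm q⁻¹ (c _)]
  abel

noncomputable def rep {q : k} (hq : q ≠ 0) :
    RingQuot (BqfRel k q d c) →ₐ[k] Module.End k (ℕ × ℕ × ℕ →₀ k) :=
  RingQuot.liftAlgHom k ⟨FreeAlgebra.lift k ![repU q, repV, repW q d c], fun _ _ h => by
    cases h <;> simp [repU_mul_repV, repW_mul_repU q d c hq, repW_mul_repV]⟩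

theorem rep_mkAlgHom_ι {q : k} (hq : q ≠ 0) (g : Fin 3) :
    rep d c hq (RingQuot.mkAlgHom k (BqfRel k q d c) (ι k g)) = ![repU q, repV, repW q d c] g := by
  simp [rep, RingQuot.liftAlgHom_mkAlgHom_apply]

theorem repW_single_zero : repW q d c (single (0, 0, l) x) = single (0, 0, l + 1) x := by
  simp [repW]

theorem repW_pow_single_zero (n : ℕ) :
    (repW q d c ^ n) (single (0, 0, l) x) = single (0, 0, l + n) x := by
  induction n with
  | zero => simp
  | succ n ih => rw [pow_succ', Module.End.mul_apply, ih, repW_single_zero, add_assoc]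

local notation "𝔲" => RingQuot.mkAlgHom k (BqfRel k q d c) (ι k (0 : Fin 3))
local notation "𝔳" => RingQuot.mkAlgHom k (BqfRel k q d c) (ι k (1 : Fin 3))
local notation "𝔴" => RingQuot.mkAlgHom k (BqfRel k q d c) (ι k (2 : Fin 3))

noncomputable def pbwMonomial (p : ℕ × ℕ × ℕ) : RingQuot (BqfRel k q d c) :=
  𝔳 ^ p.1 * 𝔲 ^ p.2.1 * 𝔴 ^ p.2.2

theorem rep_pbwMonomial_single_zero {q : k} (hq : q ≠ 0) (p : ℕ × ℕ × ℕ) :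
    rep d c hq (pbwMonomial q d c p) (single 0 1) = single p 1 := by
  obtain ⟨i, j, l⟩ := p
  simp [pbwMonomial, rep_mkAlgHom_ι, Prod.zero_eq_mk, repW_pow_single_zero, repU_pow_single,
    repV_pow_single]

theorem linearIndependent_pbwMonomial {q : k} (hq : q ≠ 0) :
    LinearIndependent k (pbwMonomial q d c) := by
  refine .of_comp ((LinearMap.applyₗ (single 0 1)).comp (rep d c hq).toLinearMap) ?_
  convert Finsupp.linearIndependent_single_one k (ℕ × ℕ × ℕ)
  exact rep_pbwMonomial_single_zero d c hq _

theorem u_mul_v : 𝔲 * 𝔳 = q • (𝔳 * 𝔲) := by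
  simpa using RingQuot.mkAlgHom_rel k (BqfRel.uv : BqfRel k q d c _ _)

theorem w_mul_u : 𝔴 * 𝔲 = q • (𝔲 * 𝔴) + ∑ a ∈ range (d + 1), c a • 𝔳 ^ a := by
  simpa using RingQuot.mkAlgHom_rel k (BqfRel.wu : BqfRel k q d c _ _)

theorem w_mul_v : 𝔴 * 𝔳 = q⁻¹ • (𝔳 * 𝔴) + ∑ a ∈ range (d + 1), c a • 𝔲 ^ a := by
  simpa using RingQuot.mkAlgHom_rel k (BqfRel.wv : BqfRel k q d c _ _)

theorem u_mul_v_pow (n : ℕ) : 𝔲 * 𝔳 ^ n = q ^ n • (𝔳 ^ n * 𝔲) := by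
  induction n with
  | zero => simp
  | succ n ih =>
    rw [pow_succ', ← mul_assoc, u_mul_v, smul_mul_assoc, mul_assoc, ih, mul_smul_comm, smul_smul,
      ← mul_assoc, ← pow_succ', pow_succ]

theorem v_mul_mem_span : ∀ m ∈ span k (Set.range (pbwMonomial q d c)),
    𝔳 * m ∈ span k (Set.range (pbwMonomial q d c)) :=
  mul_mem_span_range fun p => subset_span ⟨(p.1 + 1, p.2), by
    simp only [pbwMonomial, pow_succ', mul_assoc]⟩

theorem u_mul_mem_span : ∀ m ∈ span k (Set.range (pbwMonomial q d c)),
    𝔲 * m ∈ span k (Set.range (pbwMonomial q d c)) := by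
  refine mul_mem_span_range fun p => ?_
  have : 𝔲 * pbwMonomial q d c p = q ^ p.1 • pbwMonomial q d c (p.1, p.2.1 + 1, p.2.2) := by
    simp only [pbwMonomial, ← mul_assoc, u_mul_v_pow, smul_mul_assoc, pow_succ']
  rw [this]
  exact smul_mem _ _ (subset_span ⟨_, rfl⟩)

theorem w_mul_pbwMonomial_mem_span (i j l : ℕ) :
    𝔴 * pbwMonomial q d c (i, j, l) ∈ span k (Set.range (pbwMonomial q d c)) := by
  set S := span k (Set.range (pbwMonomial q d c))
  have mem (p) : pbwMonomial q d c p ∈ S := subset_span ⟨p, rfl⟩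
  have commute_past {x y : RingQuot (BqfRel k q d c)} {r : k}
      (hrel : 𝔴 * x = r • (x * 𝔴) + ∑ a ∈ range (d + 1), c a • y ^ a)
      (hx : ∀ m ∈ S, x * m ∈ S) (hy : ∀ m ∈ S, y * m ∈ S) {m} (hm : m ∈ S) (hwm : 𝔴 * m ∈ S) :
      𝔴 * (x * m) ∈ S := by
    rw [← mul_assoc, hrel, add_mul, smul_mul_assoc, mul_assoc, Finset.sum_mul]
    exact add_mem (smul_mem _ _ (hx _ hwm)) (sum_mem fun a _ => by
      rw [smul_mul_assoc]; exact smul_mem _ _ (pow_mul_mem hy a m hm))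
  induction i generalizing j with
  | zero =>
    induction j with
    | zero => simpa [pbwMonomial, ← pow_succ'] using mem (0, 0, l + 1)
    | succ j ih =>
      have : pbwMonomial q d c (0, j + 1, l) = 𝔲 * pbwMonomial q d c (0, j, l) := by
        simp [pbwMonomial, pow_succ', mul_assoc]
      rw [this]
      exact commute_past (w_mul_u q d c) (u_mul_mem_span q d c) (v_mul_mem_span q d c) (mem _) ih
  | succ i ih =>
    have : pbwMonomial q d c (i + 1, j, l) = 𝔳 * pbwMonomial q d c (i, j, l) := by
      simp [pbwMonomial, pow_succ', mul_assoc]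
    rw [this]
    exact commute_past (w_mul_v q d c) (v_mul_mem_span q d c) (u_mul_mem_span q d c) (mem _) (ih j)

theorem span_pbwMonomial : span k (Set.range (pbwMonomial q d c)) = ⊤ := by
  refine eq_top_of_one_mem_of_mul_mem (s := Set.range (RingQuot.mkAlgHom k _ ∘ ι k))
    ?_ (subset_span ⟨0, by simp [pbwMonomial]⟩) ?_
  · rw [Set.range_comp, Algebra.adjoin_image, FreeAlgebra.adjoin_range_ι, Algebra.map_top,
      AlgHom.range_eq_top]
    exact RingQuot.mkAlgHom_surjective k _
  · rintro _ ⟨g, rfl⟩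
    fin_cases g
    · exact u_mul_mem_span q d c
    · exact v_mul_mem_span q d c
    · exact mul_mem_span_range fun ⟨i, j, l⟩ => w_mul_pbwMonomial_mem_span q d c i j l

end BqfRel

/-- The family of monomials `vⁱ uʲ wˡ` (`i, j, l ∈ ℕ`) is a basis of
`B_q(f)` as a `k`-vector space. -/
theorem bqf_pbw_basis (k : Type*) [Field k] (q : k) (hq : q ≠ 0) (d : ℕ) (c : ℕ → k) :
    let u := RingQuot.mkAlgHom k (BqfRel k q d c) (ι k (0 : Fin 3))
    let v := RingQuot.mkAlgHom k (BqfRel k q d c) (ι k (1 : Fin 3))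
    let w := RingQuot.mkAlgHom k (BqfRel k q d c) (ι k (2 : Fin 3))
    let mon : ℕ × ℕ × ℕ → RingQuot (BqfRel k q d c) :=
      fun p => v ^ p.1 * u ^ p.2.1 * w ^ p.2.2
    LinearIndependent k mon ∧ Submodule.span k (Set.range mon) = ⊤ :=
  ⟨BqfRel.linearIndependent_pbwMonomial d c hq, BqfRel.span_pbwMonomial q d c⟩
end

section
/- In the algebra B_q(f), for every positive integer m the following identities hold: w·uᵐ = qᵐ·uᵐ·w + ∑_{j=0}^{d} [m]_{q^{j+1}}·c_j·vʲ·uᵐ⁻¹ and w·vᵐ = q⁻ᵐ·vᵐ·w + ∑_{j=0}^{d} [m]_{q^{-(j+1)}}·c_j·uʲ·vᵐ⁻¹, where for r ∈ k, [m]_r := ∑_{i=0}^{m-1} rⁱ. -/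
open FreeAlgebra

/-! The identity `w uᵐ = qᵐ uᵐ w + …` is proved by induction on `m` from `wu = quw + f(v)`:
multiplying on the right by `u` and moving the new `f(v)` term past `uᵐ` with `uᵐ vʲ = q^{mj} vʲ uᵐ`
turns its coefficient `c_j qᵐ q^{mj} = c_j (q^{j+1})ᵐ` into the next term of the geometric sum
`[m+1]_{q^{j+1}}`. Since `vu = q⁻¹uv`, the same argument with `(u, v, q)` replaced by `(v, u, q⁻¹)`
gives the identity for `w vᵐ`. -/

section QCommuting

variable {k A : Type*} [CommRing k] [Ring A] [Algebra k A] {q : k} {a b : A}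

theorem mul_pow_of_mul_eq_smul (hab : a * b = q • (b * a)) (j : ℕ) :
    a * b ^ j = q ^ j • (b ^ j * a) := by
  induction j with
  | zero => simp
  | succ n ih =>
    rw [pow_succ, ← mul_assoc, ih, smul_mul_assoc, mul_assoc, hab, mul_smul_comm, smul_smul,
      ← mul_assoc, ← pow_succ, ← pow_succ]

theorem pow_mul_pow_of_mul_eq_smul (hab : a * b = q • (b * a)) (m j : ℕ) :
    a ^ m * b ^ j = q ^ (m * j) • (b ^ j * a ^ m) := by
  induction m with
  | zero => simp
  | succ n ih =>
    rw [pow_succ, mul_assoc, mul_pow_of_mul_eq_smul hab, mul_smul_comm, ← mul_assoc, ih,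
      smul_mul_assoc, smul_smul, mul_assoc, ← pow_succ, ← pow_add, add_one_mul, add_comm]

theorem mul_pow_succ_of_mul_eq_smul_add_sum {w : A} {s : Finset ℕ} {c : ℕ → k}
    (hab : a * b = q • (b * a))
    (hwa : w * a = q • (a * w) + ∑ j ∈ s, c j • b ^ j) (n : ℕ) :
    w * a ^ (n + 1) = q ^ (n + 1) • (a ^ (n + 1) * w) +
      ∑ j ∈ s, ((∑ i ∈ Finset.range (n + 1), (q ^ (j + 1)) ^ i) * c j) • (b ^ j * a ^ n) := by
  induction n with
  | zero => simpa using hwa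
  | succ n ih =>
    have hfa : a ^ (n + 1) * ∑ j ∈ s, c j • b ^ j =
        ∑ j ∈ s, (c j * q ^ ((n + 1) * j)) • (b ^ j * a ^ (n + 1)) := by
      simp only [Finset.mul_sum, mul_smul_comm, pow_mul_pow_of_mul_eq_smul hab, smul_smul]
    calc w * a ^ (n + 1 + 1)
        = q ^ (n + 1) • (a ^ (n + 1) * (w * a)) +
            ∑ j ∈ s, ((∑ i ∈ Finset.range (n + 1), (q ^ (j + 1)) ^ i) * c j) •
              (b ^ j * a ^ (n + 1)) := by
          simp only [pow_succ _ (n + 1), ← mul_assoc, ih, add_mul, smul_mul_assoc,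
            Finset.sum_mul]
          simp only [mul_assoc, ← pow_succ]
      _ = q ^ (n + 1 + 1) • (a ^ (n + 1 + 1) * w) +
            ∑ j ∈ s, ((∑ i ∈ Finset.range (n + 1 + 1), (q ^ (j + 1)) ^ i) * c j) •
              (b ^ j * a ^ (n + 1)) := by
          rw [hwa, mul_add, smul_add, mul_smul_comm, ← mul_assoc, ← pow_succ, smul_smul,
            ← pow_succ, hfa, Finset.smul_sum, add_assoc, ← Finset.sum_add_distrib]
          congr 1
          refine Finset.sum_congr rfl fun j _ => ?_
          rw [smul_smul, ← add_smul, Finset.sum_range_succ _ (n + 1)]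
          congr 1
          ring

end QCommuting

/-- In `B_q(f)`, for every positive integer `m`:
`w uᵐ = qᵐ uᵐ w + ∑_{j=0}^{d} [m]_{q^{j+1}} c_j vʲ uᵐ⁻¹` and
`w vᵐ = q⁻ᵐ vᵐ w + ∑_{j=0}^{d} [m]_{q^{-(j+1)}} c_j uʲ vᵐ⁻¹`,
where `[m]_r := ∑_{i<m} rⁱ`. -/
theorem bqf_w_power_identities (k : Type*) [Field k] (q : k) (hq : q ≠ 0)
    (d : ℕ) (c : ℕ → k) (m : ℕ) (hm : 0 < m) :
    let u := RingQuot.mkAlgHom k (BqfRel k q d c) (ι k (0 : Fin 3))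
    let v := RingQuot.mkAlgHom k (BqfRel k q d c) (ι k (1 : Fin 3))
    let w := RingQuot.mkAlgHom k (BqfRel k q d c) (ι k (2 : Fin 3))
    w * u ^ m = q ^ m • (u ^ m * w) +
        ∑ j ∈ Finset.range (d + 1),
          ((∑ i ∈ Finset.range m, (q ^ (j + 1)) ^ i) * c j) • (v ^ j * u ^ (m - 1)) ∧
    w * v ^ m = (q⁻¹) ^ m • (v ^ m * w) +
        ∑ j ∈ Finset.range (d + 1),
          ((∑ i ∈ Finset.range m, ((q⁻¹) ^ (j + 1)) ^ i) * c j) • (u ^ j * v ^ (m - 1)) := by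
  intro u v w
  have huv : u * v = q • (v * u) := by
    simpa using RingQuot.mkAlgHom_rel k (BqfRel.uv (k := k) (q := q) (d := d) (c := c))
  have hwu : w * u = q • (u * w) + ∑ j ∈ Finset.range (d + 1), c j • v ^ j := by
    simpa using RingQuot.mkAlgHom_rel k (BqfRel.wu (k := k) (q := q) (d := d) (c := c))
  have hwv : w * v = q⁻¹ • (v * w) + ∑ j ∈ Finset.range (d + 1), c j • u ^ j := by
    simpa using RingQuot.mkAlgHom_rel k (BqfRel.wv (k := k) (q := q) (d := d) (c := c))
  have hvu : v * u = q⁻¹ • (u * v) := by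
    rw [huv, smul_smul, inv_mul_cancel₀ hq, one_smul]
  obtain ⟨n, rfl⟩ := Nat.exists_eq_add_of_lt hm
  simp only [zero_add, Nat.add_sub_cancel]
  exact ⟨mul_pow_succ_of_mul_eq_smul_add_sum huv hwu n,
    mul_pow_succ_of_mul_eq_smul_add_sum hvu hwv n⟩
end

section
/- Suppose q is a primitive n-th root of unity in k and that n does not divide j + 1 for every j in the support of f (i.e., for every j with c_j ≠ 0). Then in the algebra B_q(f) the elements uⁿ and vⁿ are central. -/
/-!
With `X_j = c_j vʲ`, the relation `uv = qvu` gives `u X_j = qʲ X_j u`, and induction on `m` turns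
`wu = quw + ∑ X_j` into
`w u^(m+1) = q^(m+1) u^(m+1) w + ∑_j (∑_{i ≤ m} (q^(j+1))^i) X_j uᵐ`.
For `m + 1 = n` the first coefficient is `1`, and each geometric sum vanishes because `q^(j+1)`
is an `n`-th root of unity other than `1` whenever `c_j ≠ 0`. So `uⁿ` commutes with `w`, and
plainly with `u` and `v`; the same argument with `(v, u, q⁻¹)` in place of `(u, v, q)` handles
`vⁿ`.
-/

open FreeAlgebra

open Finset

theorem IsPrimitiveRoot.geom_sum_pow_eq_zero {R : Type*} [CommRing R] [IsDomain R] {q : R}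
    {n m : ℕ} (hq : IsPrimitiveRoot q n) (hm : ¬ n ∣ m) :
    ∑ i ∈ range n, (q ^ m) ^ i = 0 := by
  have hne : q ^ m ≠ 1 := fun h => hm ((hq.pow_eq_one_iff_dvd m).mp h)
  refine eq_zero_of_ne_zero_of_mul_left_eq_zero (sub_ne_zero_of_ne hne.symm) ?_
  rw [mul_neg_geom_sum, ← pow_mul, mul_comm, pow_mul, hq.pow_eq_one, one_pow, sub_self]

section TwistedCommutation

variable {R A : Type*} [CommSemiring R] [Semiring A] [Algebra R A]

theorem pow_mul_pow_eq_smul_of_mul_eq_smul {q : R} {U V : A} (h : U * V = q • (V * U))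
    (a b : ℕ) : U ^ a * V ^ b = q ^ (a * b) • (V ^ b * U ^ a) := by
  have hpowV : ∀ a : ℕ, U ^ a * V = q ^ a • (V * U ^ a) := by
    intro a
    induction a with
    | zero => simp
    | succ a ih =>
      rw [pow_succ', mul_assoc, ih, mul_smul_comm, ← mul_assoc, h, smul_mul_assoc, smul_smul,
        mul_assoc, ← pow_succ', ← pow_succ]
  induction b with
  | zero => simp
  | succ b ih =>
    rw [pow_succ, ← mul_assoc, ih, smul_mul_assoc, mul_assoc, hpowV, mul_smul_comm, smul_smul,
      ← mul_assoc, ← pow_succ, ← pow_add, mul_add_one]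

theorem mul_pow_succ_eq_of_mul_eq_smul_add_sum {ι : Type*} {s : Finset ι} {q : R} {r : ι → R}
    {U W : A} {X : ι → A} (hX : ∀ j ∈ s, U * X j = r j • (X j * U))
    (hWU : W * U = q • (U * W) + ∑ j ∈ s, X j) (m : ℕ) :
    W * U ^ (m + 1) = q ^ (m + 1) • (U ^ (m + 1) * W) +
      ∑ j ∈ s, (∑ i ∈ range (m + 1), (q * r j) ^ i) • (X j * U ^ m) := by
  induction m with
  | zero => simpa using hWU
  | succ m ih =>
    have hpow : ∀ j ∈ s, U ^ (m + 1) * X j = r j ^ (m + 1) • (X j * U ^ (m + 1)) :=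
      fun j hj => by simpa using pow_mul_pow_eq_smul_of_mul_eq_smul (hX j hj) (m + 1) 1
    rw [pow_succ U (m + 1), ← mul_assoc, ih, add_mul, smul_mul_assoc, mul_assoc, hWU, mul_add,
      smul_add, mul_smul_comm, smul_smul, ← mul_assoc, ← pow_succ, ← pow_succ, add_assoc,
      mul_sum, smul_sum, sum_mul, ← sum_add_distrib]
    congr 1
    refine sum_congr rfl fun j hj => ?_
    rw [hpow j hj, smul_smul, smul_mul_assoc, mul_assoc, ← pow_succ, ← add_smul,
      sum_range_succ _ (m + 1), mul_pow, add_comm]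

theorem commute_pow_of_mul_eq_smul_add_sum {ι : Type*} {s : Finset ι} {q : R} {r : ι → R}
    {U W : A} {X : ι → A} {n : ℕ} (hX : ∀ j ∈ s, U * X j = r j • (X j * U))
    (hWU : W * U = q • (U * W) + ∑ j ∈ s, X j) (hqn : q ^ n = 1)
    (hgeom : ∀ j ∈ s, (∑ i ∈ range n, (q * r j) ^ i) • X j = 0) :
    Commute W (U ^ n) := by
  cases n with
  | zero => exact (pow_zero U).symm ▸ Commute.one_right W
  | succ m =>
    rw [Commute, SemiconjBy, mul_pow_succ_eq_of_mul_eq_smul_add_sum hX hWU m, hqn, one_smul,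
      sum_eq_zero fun j hj => by rw [← smul_mul_assoc, hgeom j hj, zero_mul], add_zero]

end TwistedCommutation

theorem commute_pow_of_bqf_relations {k A : Type*} [Field k] [Semiring A] [Algebra k A]
    {q : k} {d n : ℕ} {c : ℕ → k} (hq : IsPrimitiveRoot q n)
    (hsupp : ∀ j ≤ d, c j ≠ 0 → ¬ n ∣ j + 1)
    {U V W : A} (hUV : U * V = q • (V * U))
    (hWU : W * U = q • (U * W) + ∑ j ∈ range (d + 1), c j • V ^ j) :
    Commute V (U ^ n) ∧ Commute W (U ^ n) := by
  refine ⟨?_, commute_pow_of_mul_eq_smul_add_sum (r := fun j => q ^ j) (fun j _ => ?_) hWU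
    hq.pow_eq_one fun j hj => ?_⟩
  · have h := pow_mul_pow_eq_smul_of_mul_eq_smul hUV n 1
    rw [mul_one, pow_one, hq.pow_eq_one, one_smul] at h
    exact h.symm
  · rw [mul_smul_comm, smul_mul_assoc, smul_comm (q ^ j)]
    simpa using congrArg (c j • ·) (pow_mul_pow_eq_smul_of_mul_eq_smul hUV 1 j)
  · by_cases hc : c j = 0
    · rw [hc, zero_smul, smul_zero]
    · have hdvd := hsupp j (Nat.lt_succ_iff.mp (mem_range.mp hj)) hc
      rw [← pow_succ', hq.geom_sum_pow_eq_zero hdvd, zero_smul]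

theorem RingQuot.mem_center_of_forall_commute_mkAlgHom_ι {k X : Type*} [CommSemiring k]
    {r : FreeAlgebra k X → FreeAlgebra k X → Prop} {a : RingQuot r}
    (ha : ∀ x, Commute a (RingQuot.mkAlgHom k r (ι k x))) :
    a ∈ Subalgebra.center k (RingQuot r) := by
  rw [Subalgebra.mem_center_iff]
  intro b
  obtain ⟨b, rfl⟩ := RingQuot.mkAlgHom_surjective k r b
  induction b using FreeAlgebra.induction with
  | grade0 t => simp [Algebra.commutes]
  | grade1 x => exact (ha x).symm
  | mul x y hx hy => rw [map_mul, mul_assoc, hy, ← mul_assoc, hx, mul_assoc]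
  | add x y hx hy => rw [map_add, add_mul, mul_add, hx, hy]

theorem bqf_central_un_vn_char_zero_general (k : Type*) [Field k] (q : k)
    (d : ℕ) (c : ℕ → k) (n : ℕ) (hq : IsPrimitiveRoot q n)
    (hsupp : ∀ j ≤ d, c j ≠ 0 → ¬ (n ∣ (j + 1))) :
    let u := RingQuot.mkAlgHom k (BqfRel k q d c) (ι k (0 : Fin 3))
    let v := RingQuot.mkAlgHom k (BqfRel k q d c) (ι k (1 : Fin 3))
    u ^ n ∈ Subalgebra.center k (RingQuot (BqfRel k q d c)) ∧
    v ^ n ∈ Subalgebra.center k (RingQuot (BqfRel k q d c)) := by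
  intro u v
  obtain rfl | hn := n.eq_zero_or_pos
  · simp only [pow_zero]
    exact ⟨Subalgebra.one_mem _, Subalgebra.one_mem _⟩
  set w := RingQuot.mkAlgHom k (BqfRel k q d c) (ι k (2 : Fin 3))
  have huv : u * v = q • (v * u) := by
    simpa using RingQuot.mkAlgHom_rel k (BqfRel.uv (q := q) (d := d) (c := c))
  have hwu : w * u = q • (u * w) + ∑ j ∈ range (d + 1), c j • v ^ j := by
    simpa using RingQuot.mkAlgHom_rel k (BqfRel.wu (q := q) (d := d) (c := c))
  have hwv : w * v = q⁻¹ • (v * w) + ∑ j ∈ range (d + 1), c j • u ^ j := by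
    simpa using RingQuot.mkAlgHom_rel k (BqfRel.wv (q := q) (d := d) (c := c))
  have hvu : v * u = q⁻¹ • (u * v) := by
    rw [huv, smul_smul, inv_mul_cancel₀ (hq.ne_zero hn.ne'), one_smul]
  obtain ⟨hvun, hwun⟩ := commute_pow_of_bqf_relations hq hsupp huv hwu
  obtain ⟨huvn, hwvn⟩ := commute_pow_of_bqf_relations hq.inv hsupp hvu hwv
  constructor <;> refine RingQuot.mem_center_of_forall_commute_mkAlgHom_ι fun i => ?_ <;>
    fin_cases i
  exacts [Commute.pow_self u n, hvun.symm, hwun.symm, huvn.symm, Commute.pow_self v n, hwvn.symm]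

/-- (char 0) If `q` is a primitive `n`-th root of unity and `n ∤ j + 1`
for every `j` in the support of `f`, then `uⁿ` and `vⁿ` are central in `B_q(f)`. -/
theorem bqf_central_un_vn_char_zero (k : Type*) [Field k] [CharZero k] (q : k)
    (d : ℕ) (c : ℕ → k) (n : ℕ) (hn : 0 < n) (hq : IsPrimitiveRoot q n)
    (hsupp : ∀ j ≤ d, c j ≠ 0 → ¬ (n ∣ (j + 1))) :
    let u := RingQuot.mkAlgHom k (BqfRel k q d c) (ι k (0 : Fin 3))
    let v := RingQuot.mkAlgHom k (BqfRel k q d c) (ι k (1 : Fin 3))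
    u ^ n ∈ Subalgebra.center k (RingQuot (BqfRel k q d c)) ∧
    v ^ n ∈ Subalgebra.center k (RingQuot (BqfRel k q d c)) :=
  bqf_central_un_vn_char_zero_general k q d c n hq hsupp
end
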